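/- arXiv:2009.04112 — 6 statements merged into one kernel-verified Lean document; each statement's English description precedes it below -/
import Mathlib

section
/- For any positive integers k, l and any positive integer M, Σ_{m,n > 0, m + n < M} 1/(m^k n^l) = Σ over the shuffles of the two words z_k and z_l of the corresponding truncated multiple zeta values; explicitly, Σ_{m,n>0, m+n<M} 1/(m^k n^l) = Σ_{a+b=k+l, a≥1, b≥1} ( C(b-1, b-k) + C(b-1, b-l) ) * ζ_M(a, b), where C(n, r) = 0 if r < 0 or r > n, and ζ_M(a,b) = Σ_{0<n₁<n₂<M} 1/(n₁^a n₂^b). -/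
/-!
Write `s = x + y` and `t = x / s`. Multiplying by `x^(k+1) y^(l+1)` turns the partial fraction
expansion of `1 / (x^(k+1) y^(l+1))` over powers of `s` into the identity
`Σ_{i ≤ k} C(l+i,i) t^i (1-t)^(l+1) + Σ_{j ≤ l} C(k+j,j) (1-t)^j t^(k+1) = 1`, Pascal's
solution of the problem of points, which follows by induction from Pascal's rule. Applied to
`x = m`, `y = n` and summed over `m + n = N < M`, each term becomes a multiple of a truncated
double zeta value `ζ_M(a, b)` with `a + b = k + l + 2`, and the multiplicities are the shuffle
coefficients.
-/

/-- Truncated double zeta value `ζ_M(a,b) = Σ_{0<n₁<n₂<M} 1/(n₁^a n₂^b)`. -/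
def zetaTr2 (M a b : ℕ) : ℚ :=
  ∑ n2 ∈ Finset.Ioo 0 M, ∑ n1 ∈ Finset.Ioo 0 n2, 1 / ((n1 : ℚ) ^ a * (n2 : ℚ) ^ b)

open Finset

/-- The probability that, in independent trials succeeding with probability `1 - t`, the
`(l+1)`-st success comes before the `(k+1)`-st failure. -/
def negBinomialCdf {R : Type*} [CommRing R] (t : R) (k l : ℕ) : R :=
  ∑ i ∈ range (k + 1), ((l + i).choose i : R) * t ^ i * (1 - t) ^ (l + 1)

section ProblemOfPoints

variable {R : Type*} [CommRing R]

lemma negBinomialCdf_succ_succ (t : R) (k l : ℕ) :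
    negBinomialCdf t (k + 1) (l + 1) =
      t * negBinomialCdf t k (l + 1) + (1 - t) * negBinomialCdf t (k + 1) l := by
  unfold negBinomialCdf
  rw [mul_sum, mul_sum, sum_range_succ', sum_range_succ' _ (k + 1)]
  have pascal : ∀ i ∈ range (k + 1),
      ((l + 1 + (i + 1)).choose (i + 1) : R) * t ^ (i + 1) * (1 - t) ^ (l + 1 + 1)
        = t * (((l + 1 + i).choose i : R) * t ^ i * (1 - t) ^ (l + 1 + 1))
          + (1 - t) * (((l + (i + 1)).choose (i + 1) : R) * t ^ (i + 1) * (1 - t) ^ (l + 1)) := by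
    intro i _
    rw [show l + 1 + (i + 1) = (l + 1 + i) + 1 by omega, Nat.choose_succ_succ,
      show l + 1 + i = l + (i + 1) by omega]
    push_cast
    ring
  rw [sum_congr rfl pascal, sum_add_distrib]
  simp only [Nat.choose_zero_right, Nat.cast_one, pow_zero, one_mul, add_zero]
  ring

lemma negBinomialCdf_zero_add (t : R) (l : ℕ) :
    negBinomialCdf t 0 l + negBinomialCdf (1 - t) l 0 = 1 := by
  simp only [negBinomialCdf, sub_sub_cancel, add_zero, Nat.choose_self, Nat.choose_zero_right,
    Nat.cast_one, one_mul, zero_add, range_one, sum_singleton, pow_zero, pow_one, ← sum_mul]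
  linear_combination -geom_sum_mul (1 - t) (l + 1)

lemma negBinomialCdf_add_negBinomialCdf_one_sub (t : R) (k l : ℕ) :
    negBinomialCdf t k l + negBinomialCdf (1 - t) l k = 1 := by
  induction k generalizing l with
  | zero => exact negBinomialCdf_zero_add t l
  | succ k ihk =>
    induction l with
    | zero => simpa [add_comm] using negBinomialCdf_zero_add (1 - t) (k + 1)
    | succ l ihl =>
      rw [negBinomialCdf_succ_succ, negBinomialCdf_succ_succ, sub_sub_cancel]
      linear_combination t * ihk (l + 1) + (1 - t) * ihl

end ProblemOfPoints

section PartialFractions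

variable {K : Type*} [Field K] {x y : K}

lemma div_pow_mul_pow_mul_eq (hx : x ≠ 0) (hxy : x + y ≠ 0) (c : K) {i k : ℕ} (hik : i ≤ k)
    (l : ℕ) :
    c / (x ^ (k + 1 - i) * (x + y) ^ (l + 1 + i)) * (x ^ (k + 1) * y ^ (l + 1))
      = c * (x / (x + y)) ^ i * (y / (x + y)) ^ (l + 1) := by
  rw [show x ^ (k + 1) = x ^ (k + 1 - i) * x ^ i by rw [← pow_add]; congr 1; omega, pow_add,
    div_pow, div_pow]
  field_simp

lemma one_div_pow_mul_pow_eq_sum (hx : x ≠ 0) (hy : y ≠ 0) (hxy : x + y ≠ 0) (k l : ℕ) :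
    1 / (x ^ (k + 1) * y ^ (l + 1)) =
      ∑ i ∈ range (k + 1), ((l + i).choose i : K) / (x ^ (k + 1 - i) * (x + y) ^ (l + 1 + i))
      + ∑ j ∈ range (l + 1),
          ((k + j).choose j : K) / (y ^ (l + 1 - j) * (x + y) ^ (k + 1 + j)) := by
  have hyx : y + x ≠ 0 := by rwa [add_comm]
  have one_sub : 1 - x / (x + y) = y / (x + y) := by field_simp; ring
  have first_sum : ∀ i ∈ range (k + 1),
      ((l + i).choose i : K) / (x ^ (k + 1 - i) * (x + y) ^ (l + 1 + i))
          * (x ^ (k + 1) * y ^ (l + 1))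
        = (l + i).choose i * (x / (x + y)) ^ i * (y / (x + y)) ^ (l + 1) := fun i hi =>
    div_pow_mul_pow_mul_eq hx hxy _ (Nat.lt_succ_iff.mp (mem_range.mp hi)) l
  have second_sum : ∀ j ∈ range (l + 1),
      ((k + j).choose j : K) / (y ^ (l + 1 - j) * (x + y) ^ (k + 1 + j))
          * (x ^ (k + 1) * y ^ (l + 1))
        = (k + j).choose j * (y / (x + y)) ^ j * (x / (x + y)) ^ (k + 1) := fun j hj => by
    rw [mul_comm (x ^ _), add_comm x y]
    exact div_pow_mul_pow_mul_eq hy hyx _ (Nat.lt_succ_iff.mp (mem_range.mp hj)) k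
  have points := negBinomialCdf_add_negBinomialCdf_one_sub (x / (x + y)) k l
  rw [negBinomialCdf, negBinomialCdf, sub_sub_cancel, one_sub] at points
  rw [eq_comm, eq_div_iff (by positivity), add_mul, sum_mul, sum_mul, sum_congr rfl first_sum,
    sum_congr rfl second_sum, points]

end PartialFractions

section Reindexing

variable {M : Type*} [AddCommMonoid M]

lemma sum_filter_add_lt_eq_sum_Ioo_sum_Ioo (n : ℕ) (f : ℕ → ℕ → M) :
    ∑ p ∈ (Ioo 0 n ×ˢ Ioo 0 n).filter (fun p => p.1 + p.2 < n), f p.1 p.2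
      = ∑ N ∈ Ioo 0 n, ∑ m ∈ Ioo 0 N, f m (N - m) := by
  rw [sum_sigma']
  refine sum_nbij' (fun p => ⟨p.1 + p.2, p.1⟩) (fun s => (s.2, s.1 - s.2))
    ?_ ?_ ?_ ?_ ?_
  · rintro ⟨m, n'⟩ h
    simp only [mem_filter, mem_product, mem_Ioo, mem_sigma] at h ⊢
    omega
  · rintro ⟨N, m⟩ h
    simp only [mem_filter, mem_product, mem_Ioo, mem_sigma] at h ⊢
    omega
  · simp
  · rintro ⟨N, m⟩ h
    simp only [mem_sigma, mem_Ioo, Sigma.mk.injEq, heq_eq_eq, and_true] at h ⊢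
    omega
  · simp

lemma sum_Ioo_sub (n : ℕ) (g : ℕ → M) :
    ∑ m ∈ Ioo 0 n, g (n - m) = ∑ m ∈ Ioo 0 n, g m := by
  refine sum_nbij' (n - ·) (n - ·) ?_ ?_ ?_ ?_ ?_ <;>
    simp +contextual [mem_Ioo] <;> omega

end Reindexing

lemma sum_Ioo_ite_choose_mul {R : Type*} [Semiring R] (k l : ℕ) (g : ℕ → ℕ → R) :
    ∑ a ∈ Ioo 0 (k + 1 + (l + 1)),
        (if l + 1 ≤ k + 1 + (l + 1) - a then
          ((k + 1 + (l + 1) - a - 1).choose (k + 1 + (l + 1) - a - (l + 1)) : R) else 0)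
          * g a (k + 1 + (l + 1) - a)
      = ∑ i ∈ range (k + 1), ((l + i).choose i : R) * g (k + 1 - i) (l + 1 + i) := by
  rw [← sum_subset (Ioo_subset_Ioo_right (show k + 2 ≤ k + 1 + (l + 1) by omega))]
  · refine sum_nbij' (k + 1 - ·) (k + 1 - ·) ?_ ?_ ?_ ?_ ?_
    all_goals
      intro a ha
      simp only [mem_Ioo, mem_range] at ha ⊢
    · omega
    · omega
    · omega
    · omega
    · rw [if_pos (by omega), show k + 1 - (k + 1 - a) = a by omega,
        show l + 1 + (k + 1 - a) = k + 1 + (l + 1) - a by omega,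
        show l + (k + 1 - a) = k + 1 + (l + 1) - a - 1 by omega,
        show k + 1 - a = k + 1 + (l + 1) - a - (l + 1) by omega]
  · intro a ha hna
    simp only [mem_Ioo] at ha hna
    rw [if_neg (by omega), zero_mul]

lemma sum_Ioo_sum_Ioo_one_div_pow_mul_pow_sub (M k l : ℕ) :
    ∑ N ∈ Ioo 0 M, ∑ m ∈ Ioo 0 N,
        1 / ((m : ℚ) ^ (k + 1) * ((N - m : ℕ) : ℚ) ^ (l + 1))
      = ∑ i ∈ range (k + 1), ((l + i).choose i : ℚ) * zetaTr2 M (k + 1 - i) (l + 1 + i)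
        + ∑ j ∈ range (l + 1),
            ((k + j).choose j : ℚ) * zetaTr2 M (l + 1 - j) (k + 1 + j) := by
  have partial_fractions : ∀ N : ℕ, ∀ m ∈ Ioo 0 N,
      1 / ((m : ℚ) ^ (k + 1) * ((N - m : ℕ) : ℚ) ^ (l + 1))
        = ∑ i ∈ range (k + 1), ((l + i).choose i : ℚ) *
            (1 / ((m : ℚ) ^ (k + 1 - i) * (N : ℚ) ^ (l + 1 + i)))
          + ∑ j ∈ range (l + 1), ((k + j).choose j : ℚ) *
            (1 / (((N - m : ℕ) : ℚ) ^ (l + 1 - j) * (N : ℚ) ^ (k + 1 + j))) := by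
    intro N m hm
    obtain ⟨hm0, hmN⟩ := mem_Ioo.mp hm
    have hsum : (m : ℚ) + ((N - m : ℕ) : ℚ) = N := by
      rw [← Nat.cast_add, Nat.add_sub_cancel' hmN.le]
    simp only [mul_one_div]
    rw [one_div_pow_mul_pow_eq_sum (Nat.cast_ne_zero.mpr hm0.ne')
      (Nat.cast_ne_zero.mpr (by omega)) (by rw [hsum]; exact Nat.cast_ne_zero.mpr (by omega)), hsum]
  have row_sum : ∀ N ∈ Ioo 0 M,
      ∑ m ∈ Ioo 0 N, 1 / ((m : ℚ) ^ (k + 1) * ((N - m : ℕ) : ℚ) ^ (l + 1))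
        = ∑ i ∈ range (k + 1), ((l + i).choose i : ℚ) *
            ∑ m ∈ Ioo 0 N, 1 / ((m : ℚ) ^ (k + 1 - i) * (N : ℚ) ^ (l + 1 + i))
          + ∑ j ∈ range (l + 1), ((k + j).choose j : ℚ) *
            ∑ m ∈ Ioo 0 N, 1 / ((m : ℚ) ^ (l + 1 - j) * (N : ℚ) ^ (k + 1 + j)) := by
    intro N _
    simp only [sum_congr rfl (partial_fractions N), sum_add_distrib, mul_sum]
    rw [sum_comm, sum_comm (s := Ioo 0 N)]
    congr 1
    refine sum_congr rfl fun j _ => ?_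
    exact sum_Ioo_sub N fun n =>
      ((k + j).choose j : ℚ) * (1 / ((n : ℚ) ^ (l + 1 - j) * (N : ℚ) ^ (k + 1 + j)))
  rw [sum_congr rfl row_sum, sum_add_distrib, sum_comm, sum_comm (s := Ioo 0 M)]
  simp only [zetaTr2, mul_sum]

theorem stmt_3_general (k l M : ℕ) (hk : 0 < k) (hl : 0 < l) :
    (∑ p ∈ ((Finset.Ioo 0 M) ×ˢ (Finset.Ioo 0 M)).filter (fun p => p.1 + p.2 < M),
        1 / ((p.1 : ℚ) ^ k * (p.2 : ℚ) ^ l))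
      = ∑ a ∈ Finset.Ioo 0 (k + l),
          (((if k ≤ k + l - a then (((k + l - a - 1).choose (k + l - a - k) : ℕ) : ℚ) else 0)
            + (if l ≤ k + l - a then (((k + l - a - 1).choose (k + l - a - l) : ℕ) : ℚ) else 0))
            * zetaTr2 M a (k + l - a)) := by
  obtain ⟨k, rfl⟩ : ∃ k', k = k' + 1 := ⟨k - 1, by omega⟩
  obtain ⟨l, rfl⟩ : ∃ l', l = l' + 1 := ⟨l - 1, by omega⟩
  rw [sum_filter_add_lt_eq_sum_Ioo_sum_Ioo M fun m n => 1 / ((m : ℚ) ^ (k + 1) * n ^ (l + 1)),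
    sum_Ioo_sum_Ioo_one_div_pow_mul_pow_sub]
  simp only [add_mul, sum_add_distrib]
  rw [sum_Ioo_ite_choose_mul, add_comm (k + 1) (l + 1), sum_Ioo_ite_choose_mul, add_comm]

/-- Depth-one shuffle relation for truncated MZVs:
`Σ_{m,n>0, m+n<M} 1/(m^k n^l) = Σ_{a+b=k+l, a,b≥1} (C(b-1,b-k)+C(b-1,b-l)) ζ_M(a,b)`,
with the convention `C(n,r)=0` for `r<0` (encoded by the `if` guards). -/
theorem stmt_3 (k l M : ℕ) (hk : 0 < k) (hl : 0 < l) (hM : 0 < M) :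
    (∑ p ∈ ((Finset.Ioo 0 M) ×ˢ (Finset.Ioo 0 M)).filter (fun p => p.1 + p.2 < M),
        1 / ((p.1 : ℚ) ^ k * (p.2 : ℚ) ^ l))
      = ∑ a ∈ Finset.Ioo 0 (k + l),
          (((if k ≤ k + l - a then (((k + l - a - 1).choose (k + l - a - k) : ℕ) : ℚ) else 0)
            + (if l ≤ k + l - a then (((k + l - a - 1).choose (k + l - a - l) : ℕ) : ℚ) else 0))
            * zetaTr2 M a (k + l - a)) :=
  stmt_3_general k l M hk hl
end

section
/- Let k, l ≥ 1. For positive integers p₁, …, p_{k+l}, one has 1/( p₁ (p₁+p₂) ⋯ (p₁+⋯+p_k) · p_{k+1} (p_{k+1}+p_{k+2}) ⋯ (p_{k+1}+⋯+p_{k+l}) ) = Σ_{σ ∈ Σ_{k,l}} 1/( p_{σ⁻¹(1)} (p_{σ⁻¹(1)}+p_{σ⁻¹(2)}) ⋯ (p_{σ⁻¹(1)}+⋯+p_{σ⁻¹(k+l)}) ), where Σ_{k,l} = { σ ∈ S_{k+l} : σ(1) < ⋯ < σ(k) and σ(k+1) < ⋯ < σ(k+l) }. -/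
open Finset

lemma lower_eq_range (s : Finset ℕ) (hs : ∀ x ∈ s, ∀ y, y < x → y ∈ s) :
    s = Finset.range s.card := by
  rcases s.eq_empty_or_nonempty with h | h
  · simp [h]
  · have hM : s = Finset.range (s.max' h + 1) := by
      ext x
      simp only [Finset.mem_range, Nat.lt_succ_iff]
      constructor
      · exact fun hx => s.le_max' x hx
      · intro hx
        rcases eq_or_lt_of_le hx with rfl | hlt
        · exact s.max'_mem h
        · exact hs _ (s.max'_mem h) _ hlt
    have hc : s.card = s.max' h + 1 := by
      have := congrArg Finset.card hM
      rwa [Finset.card_range] at this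
    conv_lhs => rw [hM]
    rw [hc]

def PS (a : ℕ → ℚ) (m : ℕ) : ℚ := ∑ t ∈ Finset.range m, a t

lemma PS_zero (a : ℕ → ℚ) : PS a 0 = 0 := by simp [PS]

lemma PS_pos {a : ℕ → ℚ} {m : ℕ} (ha : ∀ i < m, 0 < a i) (hm : 0 < m) : 0 < PS a m :=
  Finset.sum_pos (fun i hi => ha i (Finset.mem_range.1 hi))
    (by rw [Finset.nonempty_range_iff]; omega)

lemma core (a b : ℕ → ℚ) : ∀ n k l : ℕ, k + l = n → (∀ i < k, 0 < a i) → (∀ i < l, 0 < b i) →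
    ∑ A ∈ (Finset.range n).powersetCard k,
        (∏ i ∈ Finset.range n,
          (PS a ((A ∩ Finset.range (i + 1)).card)
            + PS b (i + 1 - (A ∩ Finset.range (i + 1)).card)))⁻¹
      = (∏ i ∈ Finset.range k, PS a (i + 1))⁻¹ *
          (∏ i ∈ Finset.range l, PS b (i + 1))⁻¹ := by
  intro n
  induction n with
  | zero =>
    intro k l hkl _ _
    obtain ⟨rfl, rfl⟩ : k = 0 ∧ l = 0 := by omega
    simp
  | succ n ih =>
    intro k l hkl ha hb
    rcases Nat.eq_zero_or_pos k with rfl | hk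
    · have hl : l = n + 1 := by omega
      subst hl
      simp only [Finset.powersetCard_zero, Finset.sum_singleton, Finset.empty_inter,
        Finset.card_empty, PS_zero, zero_add, Nat.sub_zero, one_mul, Finset.range_zero,
        Finset.prod_empty, inv_one]
    rcases Nat.eq_zero_or_pos l with rfl | hl
    · have hkn : k = n + 1 := by omega
      subst hkn
      have h1 : (Finset.range (n + 1)).powersetCard (n + 1) = {Finset.range (n + 1)} := by
        have := Finset.powersetCard_self (Finset.range (n + 1))
        rwa [Finset.card_range] at this
      rw [h1, Finset.sum_singleton]
      have h2 : ∀ i ∈ Finset.range (n + 1),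
          (PS a ((Finset.range (n + 1) ∩ Finset.range (i + 1)).card)
            + PS b (i + 1 - (Finset.range (n + 1) ∩ Finset.range (i + 1)).card))
          = PS a (i + 1) := by
        intro i hi
        have hsub : Finset.range (i + 1) ⊆ Finset.range (n + 1) :=
          Finset.range_subset_range.2 (by simp only [Finset.mem_range] at hi; omega)
        rw [Finset.inter_eq_right.2 hsub, Finset.card_range]
        simp [PS_zero]
      rw [Finset.prod_congr rfl h2]
      simp [← Finset.prod_inv_distrib]
    -- main induction step
    obtain ⟨k', rfl⟩ : ∃ k', k = k' + 1 := ⟨k - 1, by omega⟩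
    obtain ⟨l', rfl⟩ : ∃ l', l = l' + 1 := ⟨l - 1, by omega⟩
    have hnmem : n ∉ Finset.range n := Finset.notMem_range_self
    rw [Finset.range_add_one, Finset.powersetCard_succ_insert hnmem]
    have hdisj : Disjoint ((Finset.range n).powersetCard (k' + 1))
        (((Finset.range n).powersetCard k').image (insert n)) := by
      rw [Finset.disjoint_left]
      intro A hA hA'
      obtain ⟨hAsub, -⟩ := Finset.mem_powersetCard.1 hA
      obtain ⟨A', hA', rfl⟩ := Finset.mem_image.1 hA'
      exact absurd (Finset.mem_range.1 (hAsub (Finset.mem_insert_self n A'))) (lt_irrefl n)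
    rw [Finset.sum_union hdisj]
    have e1 : ∑ A ∈ (Finset.range n).powersetCard (k' + 1),
        (∏ i ∈ insert n (Finset.range n),
          (PS a ((A ∩ Finset.range (i + 1)).card)
            + PS b (i + 1 - (A ∩ Finset.range (i + 1)).card)))⁻¹
        = (PS a (k' + 1) + PS b (l' + 1))⁻¹ *
          ((∏ i ∈ Finset.range (k' + 1), PS a (i + 1))⁻¹ *
            (∏ i ∈ Finset.range l', PS b (i + 1))⁻¹) := by
      have hprod : ∀ A ∈ (Finset.range n).powersetCard (k' + 1),
          (∏ i ∈ insert n (Finset.range n),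
            (PS a ((A ∩ Finset.range (i + 1)).card)
              + PS b (i + 1 - (A ∩ Finset.range (i + 1)).card)))⁻¹
          = (PS a (k' + 1) + PS b (l' + 1))⁻¹ *
            (∏ i ∈ Finset.range n,
              (PS a ((A ∩ Finset.range (i + 1)).card)
                + PS b (i + 1 - (A ∩ Finset.range (i + 1)).card)))⁻¹ := by
        intro A hA
        obtain ⟨hAsub, hAcard⟩ := Finset.mem_powersetCard.1 hA
        have h1 : A ∩ Finset.range (n + 1) = A :=
          Finset.inter_eq_left.2 (hAsub.trans (Finset.range_subset_range.2 (by omega)))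
        rw [Finset.prod_insert hnmem, h1, hAcard,
          show n + 1 - (k' + 1) = l' + 1 by omega, mul_inv]
      rw [Finset.sum_congr rfl hprod, ← Finset.mul_sum,
        ih (k' + 1) l' (by omega) ha (fun i hi => hb i (by omega))]
    have hinj : ∀ x ∈ (Finset.range n).powersetCard k', ∀ y ∈ (Finset.range n).powersetCard k',
        insert n x = insert n y → x = y := by
      intro x hx y hy hxy
      obtain ⟨hxs, -⟩ := Finset.mem_powersetCard.1 hx
      obtain ⟨hys, -⟩ := Finset.mem_powersetCard.1 hy
      have hnx : n ∉ x := fun h => absurd (Finset.mem_range.1 (hxs h)) (lt_irrefl n)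
      have hny : n ∉ y := fun h => absurd (Finset.mem_range.1 (hys h)) (lt_irrefl n)
      rw [← Finset.erase_insert hnx, hxy, Finset.erase_insert hny]
    have e2 : ∑ A ∈ ((Finset.range n).powersetCard k').image (insert n),
        (∏ i ∈ insert n (Finset.range n),
          (PS a ((A ∩ Finset.range (i + 1)).card)
            + PS b (i + 1 - (A ∩ Finset.range (i + 1)).card)))⁻¹
        = (PS a (k' + 1) + PS b (l' + 1))⁻¹ *
          ((∏ i ∈ Finset.range k', PS a (i + 1))⁻¹ *
            (∏ i ∈ Finset.range (l' + 1), PS b (i + 1))⁻¹) := by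
      rw [Finset.sum_image hinj]
      have hprod : ∀ A ∈ (Finset.range n).powersetCard k',
          (∏ i ∈ insert n (Finset.range n),
            (PS a (((insert n A) ∩ Finset.range (i + 1)).card)
              + PS b (i + 1 - ((insert n A) ∩ Finset.range (i + 1)).card)))⁻¹
          = (PS a (k' + 1) + PS b (l' + 1))⁻¹ *
            (∏ i ∈ Finset.range n,
              (PS a ((A ∩ Finset.range (i + 1)).card)
                + PS b (i + 1 - (A ∩ Finset.range (i + 1)).card)))⁻¹ := by
        intro A hA
        obtain ⟨hAsub, hAcard⟩ := Finset.mem_powersetCard.1 hA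
        have hnA : n ∉ A := fun h => absurd (Finset.mem_range.1 (hAsub h)) (lt_irrefl n)
        have h1 : (insert n A) ∩ Finset.range (n + 1) = insert n A :=
          Finset.inter_eq_left.2 (Finset.insert_subset (Finset.mem_range.2 (by omega))
            (hAsub.trans (Finset.range_subset_range.2 (by omega))))
        have h2 : ∀ i ∈ Finset.range n,
            (insert n A) ∩ Finset.range (i + 1) = A ∩ Finset.range (i + 1) := by
          intro i hi
          exact Finset.insert_inter_of_notMem
            (by simp only [Finset.mem_range] at hi ⊢; omega)
        rw [Finset.prod_insert hnmem, h1, Finset.card_insert_of_notMem hnA, hAcard,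
          show n + 1 - (k' + 1) = l' + 1 by omega, mul_inv,
          Finset.prod_congr rfl (fun i hi => by rw [h2 i hi])]
      rw [Finset.sum_congr rfl hprod, ← Finset.mul_sum,
        ih k' (l' + 1) (by omega) (fun i hi => ha i (by omega)) hb]
    rw [e1, e2, Finset.prod_range_succ, Finset.prod_range_succ (fun i => PS b (i + 1))]
    have hA1 : (0:ℚ) < ∏ i ∈ Finset.range k', PS a (i + 1) :=
      Finset.prod_pos fun i hi =>
        PS_pos (fun j hj => ha j (by simp only [Finset.mem_range] at hi; omega)) (by omega)
    have hB1 : (0:ℚ) < ∏ i ∈ Finset.range l', PS b (i + 1) :=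
      Finset.prod_pos fun i hi =>
        PS_pos (fun j hj => hb j (by simp only [Finset.mem_range] at hi; omega)) (by omega)
    have hA2 : (0:ℚ) < PS a (k' + 1) := PS_pos ha (by omega)
    have hB2 : (0:ℚ) < PS b (l' + 1) := PS_pos hb (by omega)
    have hS : (0:ℚ) < PS a (k' + 1) + PS b (l' + 1) := by positivity
    field_simp
    ring

section Bridge

/-- positions of the first-block letters -/
def Aset (k : ℕ) {n : ℕ} (σ : Equiv.Perm (Fin n)) : Finset ℕ :=
  Finset.image (fun u => ((σ u : Fin n) : ℕ)) (Finset.univ.filter fun u : Fin n => (u : ℕ) < k)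

lemma card_filter_lt (n k : ℕ) (h : k ≤ n) :
    (Finset.univ.filter fun u : Fin n => (u : ℕ) < k).card = k := by
  have he : (Finset.univ.filter fun u : Fin n => (u : ℕ) < k)
      = (Finset.range k).attachFin (fun m hm => lt_of_lt_of_le (Finset.mem_range.1 hm) h) := by
    ext u; simp
  rw [he, Finset.card_attachFin, Finset.card_range]

lemma Aset_card (k l : ℕ) (σ : Equiv.Perm (Fin (k + l))) : (Aset k σ).card = k := by
  have hinj : Function.Injective (fun u : Fin (k + l) => ((σ u : Fin (k + l)) : ℕ)) :=
    fun x y h => σ.injective (Fin.val_injective h)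
  rw [Aset, Finset.card_image_of_injective _ hinj, card_filter_lt _ _ (by omega)]

lemma Aset_mem_powersetCard (k l : ℕ) (σ : Equiv.Perm (Fin (k + l))) :
    Aset k σ ∈ (Finset.range (k + l)).powersetCard k := by
  refine Finset.mem_powersetCard.2 ⟨?_, Aset_card k l σ⟩
  intro x hx
  obtain ⟨u, -, rfl⟩ := Finset.mem_image.1 hx
  exact Finset.mem_range.2 (σ u).isLt

end Bridge

lemma bridge_term (k l : ℕ) (q : ℕ → ℚ) (σ : Equiv.Perm (Fin (k + l)))
    (hσ : ∀ i j : Fin (k + l), i < j → ((j : ℕ) < k ∨ k ≤ (i : ℕ)) → σ i < σ j)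
    (i : Fin (k + l)) :
    ∑ j ∈ Finset.univ.filter (fun j : Fin (k + l) => j ≤ i), q ((σ.symm j : Fin (k + l)) : ℕ)
      = PS q ((Aset k σ ∩ Finset.range ((i : ℕ) + 1)).card)
        + PS (fun t => q (k + t))
            ((i : ℕ) + 1 - (Aset k σ ∩ Finset.range ((i : ℕ) + 1)).card) := by
  classical
  have h0 : ∑ j ∈ Finset.univ.filter (fun j : Fin (k + l) => j ≤ i),
      q ((σ.symm j : Fin (k + l)) : ℕ)
      = ∑ u ∈ Finset.univ.filter (fun u => σ u ≤ i), q (u : ℕ) := by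
    refine Finset.sum_nbij' (fun j => σ.symm j) (fun u => σ u) ?_ ?_ ?_ ?_ ?_
    · intro j hj
      simp only [Finset.mem_filter, Finset.mem_univ, true_and, Equiv.apply_symm_apply]
      exact (Finset.mem_filter.1 hj).2
    · intro u hu
      simp only [Finset.mem_filter, Finset.mem_univ, true_and]
      exact (Finset.mem_filter.1 hu).2
    · intro j _; simp
    · intro u _; simp
    · intro j _; rfl
  have hsplit := Finset.sum_filter_add_sum_filter_not
    (Finset.univ.filter (fun u : Fin (k + l) => σ u ≤ i)) (fun u => (u : ℕ) < k)
    (fun u => q (u : ℕ))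
  rw [Finset.filter_filter, Finset.filter_filter] at hsplit
  set s1 : Finset (Fin (k + l)) :=
    Finset.univ.filter (fun u => σ u ≤ i ∧ (u : ℕ) < k) with hs1
  set s2 : Finset (Fin (k + l)) :=
    Finset.univ.filter (fun u => σ u ≤ i ∧ ¬ (u : ℕ) < k) with hs2
  -- first block sum
  have hsum1 : ∑ u ∈ s1, q (u : ℕ) = PS q s1.card := by
    have hinj : ∀ x ∈ s1, ∀ y ∈ s1, Fin.val x = Fin.val y → x = y := fun x _ y _ h => Fin.ext h
    rw [← Finset.sum_image hinj]
    have hlow : ∀ x ∈ s1.image Fin.val, ∀ y, y < x → y ∈ s1.image Fin.val := by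
      intro x hx y hy
      obtain ⟨u, hu, rfl⟩ := Finset.mem_image.1 hx
      obtain ⟨hu0, huk⟩ := (Finset.mem_filter.1 hu).2
      have hylt : y < k + l := by have := u.isLt; omega
      refine Finset.mem_image.2 ⟨⟨y, hylt⟩, ?_, rfl⟩
      refine Finset.mem_filter.2 ⟨Finset.mem_univ _, ?_, (by omega : y < k)⟩
      exact le_of_lt (lt_of_lt_of_le
        (hσ ⟨y, hylt⟩ u (show y < (u : ℕ) from hy) (Or.inl huk)) hu0)
    rw [lower_eq_range _ hlow,
      Finset.card_image_of_injOn (fun x _ y _ h => Fin.ext h)]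
    rfl
  -- second block sum
  have hk2 : ∀ u ∈ s2, k ≤ (u : ℕ) := by
    intro u hu
    have := (Finset.mem_filter.1 hu).2.2
    omega
  have hsum2 : ∑ u ∈ s2, q (u : ℕ) = PS (fun t => q (k + t)) s2.card := by
    have hinj : ∀ x ∈ s2, ∀ y ∈ s2,
        (fun u : Fin (k + l) => (u : ℕ) - k) x = (fun u : Fin (k + l) => (u : ℕ) - k) y →
          x = y := by
      intro x hx y hy h
      have := hk2 x hx; have := hk2 y hy
      simp only at h
      exact Fin.ext (by omega)
    have hre : ∑ u ∈ s2, q (u : ℕ) = ∑ u ∈ s2, q (k + ((u : ℕ) - k)) :=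
      Finset.sum_congr rfl (fun u hu => by have := hk2 u hu; congr 1; omega)
    rw [hre, ← Finset.sum_image (f := fun x => q (k + x)) hinj]
    have hlow : ∀ x ∈ s2.image (fun u : Fin (k + l) => (u : ℕ) - k), ∀ y, y < x →
        y ∈ s2.image (fun u : Fin (k + l) => (u : ℕ) - k) := by
      intro x hx y hy
      obtain ⟨u, hu, rfl⟩ := Finset.mem_image.1 hx
      have huk : k ≤ (u : ℕ) := hk2 u hu
      obtain ⟨hu0, -⟩ := (Finset.mem_filter.1 hu).2
      have hylt : k + y < k + l := by have := u.isLt; omega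
      refine Finset.mem_image.2 ⟨⟨k + y, hylt⟩, ?_, (by omega : k + y - k = y)⟩
      refine Finset.mem_filter.2 ⟨Finset.mem_univ _, ?_, (by omega : ¬ k + y < k)⟩
      exact le_of_lt (lt_of_lt_of_le
        (hσ ⟨k + y, hylt⟩ u (show k + y < (u : ℕ) by omega)
          (Or.inr (Nat.le_add_right k y))) hu0)
    rw [lower_eq_range _ hlow, Finset.card_image_of_injOn
      (fun x hx y hy h => hinj x hx y hy h)]
    rfl
  -- cardinalities
  have hcard0 : (Finset.univ.filter (fun u : Fin (k + l) => σ u ≤ i)).card = (i : ℕ) + 1 := by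
    have himg : (Finset.univ.filter (fun u : Fin (k + l) => σ u ≤ i)).image σ
        = Finset.univ.filter (fun j : Fin (k + l) => j ≤ i) := by
      ext j
      simp only [Finset.mem_image, Finset.mem_filter, Finset.mem_univ, true_and]
      constructor
      · rintro ⟨u, hu, rfl⟩; exact hu
      · intro hj; exact ⟨σ.symm j, by simpa using hj, by simp⟩
    have h1 := congrArg Finset.card himg
    rw [Finset.card_image_of_injective _ σ.injective] at h1
    have h2 : Finset.univ.filter (fun j : Fin (k + l) => j ≤ i) = Finset.Iic i := by
      ext j; simp
    rw [h1, h2, Fin.card_Iic]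
  have hcard12 : s1.card + s2.card = (i : ℕ) + 1 := by
    have := Finset.card_filter_add_card_filter_not
      (s := Finset.univ.filter (fun u : Fin (k + l) => σ u ≤ i)) (p := fun u => (u : ℕ) < k)
    rw [Finset.filter_filter, Finset.filter_filter, hcard0] at this
    exact this
  -- identification with the subset counting
  have hAi : Aset k σ ∩ Finset.range ((i : ℕ) + 1)
      = s1.image (fun u => ((σ u : Fin (k + l)) : ℕ)) := by
    ext x
    rw [hs1]
    simp only [Aset, Finset.mem_inter, Finset.mem_image, Finset.mem_filter, Finset.mem_univ,
      true_and, Finset.mem_range]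
    constructor
    · rintro ⟨⟨u, hu, rfl⟩, hx⟩
      exact ⟨u, ⟨by rw [Fin.le_def]; omega, hu⟩, rfl⟩
    · rintro ⟨u, ⟨hle, hu⟩, rfl⟩
      rw [Fin.le_def] at hle
      exact ⟨⟨u, hu, rfl⟩, by omega⟩
  have hc1 : (Aset k σ ∩ Finset.range ((i : ℕ) + 1)).card = s1.card := by
    rw [hAi, Finset.card_image_of_injOn
      (fun x _ y _ h => σ.injective (Fin.val_injective h))]
  rw [h0, ← hsplit, hsum1, hsum2, hc1]
  have h2 : (i : ℕ) + 1 - s1.card = s2.card := by omega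
  rw [h2]

def sB (k l : ℕ) (A : Finset ℕ) (hsub : ∀ x ∈ A, x < k + l) : Finset (Fin (k + l)) :=
  A.attachFin hsub

lemma sB_card (k l : ℕ) (A : Finset ℕ) (hsub : ∀ x ∈ A, x < k + l) (hcard : A.card = k) :
    (sB k l A hsub).card = k := by
  rw [sB, Finset.card_attachFin, hcard]

lemma sBc_card (k l : ℕ) (A : Finset ℕ) (hsub : ∀ x ∈ A, x < k + l) (hcard : A.card = k) :
    (sB k l A hsub)ᶜ.card = l := by
  rw [Finset.card_compl, sB_card k l A hsub hcard, Fintype.card_fin]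
  omega

def sF (k l : ℕ) (A : Finset ℕ) (hsub : ∀ x ∈ A, x < k + l) (hcard : A.card = k)
    (u : Fin (k + l)) : Fin (k + l) :=
  if h : (u : ℕ) < k then
    (sB k l A hsub).orderEmbOfFin (sB_card k l A hsub hcard) ⟨u, h⟩
  else
    (sB k l A hsub)ᶜ.orderEmbOfFin (sBc_card k l A hsub hcard)
      ⟨(u : ℕ) - k, by have := u.isLt; omega⟩

lemma sF_injective (k l : ℕ) (A : Finset ℕ) (hsub : ∀ x ∈ A, x < k + l) (hcard : A.card = k) :
    Function.Injective (sF k l A hsub hcard) := by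
  intro u v h
  by_cases hu : (u : ℕ) < k <;> by_cases hv : (v : ℕ) < k
  · rw [sF, sF, dif_pos hu, dif_pos hv] at h
    have h2 := ((sB k l A hsub).orderEmbOfFin (sB_card k l A hsub hcard)).injective h
    have h3 : (u : ℕ) = (v : ℕ) := Fin.mk_eq_mk.1 h2
    exact Fin.ext h3
  · rw [sF, sF, dif_pos hu, dif_neg hv] at h
    have h1 := Finset.orderEmbOfFin_mem (sB k l A hsub) (sB_card k l A hsub hcard) ⟨u, hu⟩
    have h2 := Finset.orderEmbOfFin_mem (sB k l A hsub)ᶜ (sBc_card k l A hsub hcard)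
      ⟨(v : ℕ) - k, by have := v.isLt; omega⟩
    rw [h] at h1
    exact absurd h1 (Finset.mem_compl.1 h2)
  · rw [sF, sF, dif_neg hu, dif_pos hv] at h
    have h1 := Finset.orderEmbOfFin_mem (sB k l A hsub) (sB_card k l A hsub hcard) ⟨v, hv⟩
    have h2 := Finset.orderEmbOfFin_mem (sB k l A hsub)ᶜ (sBc_card k l A hsub hcard)
      ⟨(u : ℕ) - k, by have := u.isLt; omega⟩
    rw [← h] at h1
    exact absurd h1 (Finset.mem_compl.1 h2)
  · rw [sF, sF, dif_neg hu, dif_neg hv] at h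
    have := ((sB k l A hsub)ᶜ.orderEmbOfFin (sBc_card k l A hsub hcard)).injective h
    have hval := congrArg Fin.val this
    simp only at hval
    exact Fin.ext (by omega)

noncomputable def shufflePerm (k l : ℕ) (A : Finset ℕ) (hsub : ∀ x ∈ A, x < k + l)
    (hcard : A.card = k) : Equiv.Perm (Fin (k + l)) :=
  Equiv.ofBijective (sF k l A hsub hcard)
    ((Fintype.bijective_iff_injective_and_card _).2 ⟨sF_injective k l A hsub hcard, rfl⟩)

lemma shufflePerm_apply (k l : ℕ) (A : Finset ℕ) (hsub : ∀ x ∈ A, x < k + l)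
    (hcard : A.card = k) (u : Fin (k + l)) :
    shufflePerm k l A hsub hcard u = sF k l A hsub hcard u := rfl

lemma shufflePerm_cond (k l : ℕ) (A : Finset ℕ) (hsub : ∀ x ∈ A, x < k + l)
    (hcard : A.card = k) :
    ∀ i j : Fin (k + l), i < j → ((j : ℕ) < k ∨ k ≤ (i : ℕ)) →
      shufflePerm k l A hsub hcard i < shufflePerm k l A hsub hcard j := by
  intro i j hij hcase
  rw [shufflePerm_apply, shufflePerm_apply]
  rcases hcase with hj | hi
  · have hi : (i : ℕ) < k := lt_trans hij hj
    rw [sF, sF, dif_pos hi, dif_pos hj]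
    exact ((sB k l A hsub).orderEmbOfFin (sB_card k l A hsub hcard)).strictMono
      (show (i : ℕ) < (j : ℕ) from hij)
  · have hj : k ≤ (j : ℕ) := le_trans hi (le_of_lt hij)
    rw [sF, sF, dif_neg (by omega), dif_neg (by omega)]
    exact ((sB k l A hsub)ᶜ.orderEmbOfFin (sBc_card k l A hsub hcard)).strictMono
      (show (i : ℕ) - k < (j : ℕ) - k by have h : (i : ℕ) < (j : ℕ) := hij; omega)

lemma shufflePerm_Aset (k l : ℕ) (A : Finset ℕ) (hsub : ∀ x ∈ A, x < k + l)
    (hcard : A.card = k) : Aset k (shufflePerm k l A hsub hcard) = A := by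
  have hsubA : Aset k (shufflePerm k l A hsub hcard) ⊆ A := by
    intro x hx
    obtain ⟨u, hu, rfl⟩ := Finset.mem_image.1 hx
    have huk : (u : ℕ) < k := (Finset.mem_filter.1 hu).2
    have h1 := Finset.orderEmbOfFin_mem (sB k l A hsub) (sB_card k l A hsub hcard) ⟨u, huk⟩
    have h1' : (((sB k l A hsub).orderEmbOfFin (sB_card k l A hsub hcard) ⟨u, huk⟩ :
        Fin (k + l)) : ℕ) ∈ A := (Finset.mem_attachFin hsub).1 h1
    have heq : shufflePerm k l A hsub hcard u
        = (sB k l A hsub).orderEmbOfFin (sB_card k l A hsub hcard) ⟨u, huk⟩ := by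
      rw [shufflePerm_apply, sF, dif_pos huk]
    rw [heq]
    exact h1'
  exact Finset.eq_of_subset_of_card_le hsubA (by rw [hcard, Aset_card k l])

lemma shufflePerm_eq (k l : ℕ) (σ : Equiv.Perm (Fin (k + l)))
    (hσ : ∀ i j : Fin (k + l), i < j → ((j : ℕ) < k ∨ k ≤ (i : ℕ)) → σ i < σ j)
    (hsub : ∀ x ∈ Aset k σ, x < k + l) (hcard : (Aset k σ).card = k) :
    shufflePerm k l (Aset k σ) hsub hcard = σ := by
  have hB : sB k l (Aset k σ) hsub
      = Finset.image σ (Finset.univ.filter fun u : Fin (k + l) => (u : ℕ) < k) := by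
    ext v
    constructor
    · intro hv
      have hv' : (v : ℕ) ∈ Aset k σ := (Finset.mem_attachFin hsub).1 hv
      obtain ⟨u, hu, huv⟩ := Finset.mem_image.1 hv'
      exact Finset.mem_image.2 ⟨u, hu, Fin.ext huv⟩
    · intro hv
      obtain ⟨u, hu, rfl⟩ := Finset.mem_image.1 hv
      exact (Finset.mem_attachFin hsub).2 (Finset.mem_image.2 ⟨u, hu, rfl⟩)
  have hBc : (sB k l (Aset k σ) hsub)ᶜ
      = Finset.image σ (Finset.univ.filter fun u : Fin (k + l) => ¬ (u : ℕ) < k) := by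
    ext v
    simp only [Finset.mem_compl, hB, Finset.mem_image, Finset.mem_filter, Finset.mem_univ,
      true_and, not_exists, not_and]
    constructor
    · intro h
      exact ⟨σ.symm v, fun hc => h (σ.symm v) hc (σ.apply_symm_apply v), σ.apply_symm_apply v⟩
    · rintro ⟨u, hu, rfl⟩ w hw hww
      exact hu (σ.injective hww ▸ hw)
  have key1 : (fun t : Fin k => σ ⟨(t : ℕ), by have := t.isLt; omega⟩)
      = ⇑((sB k l (Aset k σ) hsub).orderEmbOfFin (sB_card k l (Aset k σ) hsub hcard)) := by
    refine Finset.orderEmbOfFin_unique _ ?_ ?_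
    · intro t
      rw [hB]
      exact Finset.mem_image_of_mem σ (Finset.mem_filter.2 ⟨Finset.mem_univ _, t.isLt⟩)
    · intro t t' htt
      exact hσ _ _ htt (Or.inl t'.isLt)
  have key2 : (fun t : Fin l => σ ⟨k + (t : ℕ), by have := t.isLt; omega⟩)
      = ⇑((sB k l (Aset k σ) hsub)ᶜ.orderEmbOfFin (sBc_card k l (Aset k σ) hsub hcard)) := by
    refine Finset.orderEmbOfFin_unique _ ?_ ?_
    · intro t
      rw [hBc]
      refine Finset.mem_image_of_mem σ (Finset.mem_filter.2 ⟨Finset.mem_univ _, ?_⟩)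
      exact (show ¬ k + (t : ℕ) < k by omega)
    · intro t t' htt
      exact hσ _ _ (show k + (t : ℕ) < k + (t' : ℕ) from Nat.add_lt_add_left htt k)
        (Or.inr (Nat.le_add_right k _))
  apply Equiv.ext
  intro u
  by_cases h : (u : ℕ) < k
  · have hc := congrFun key1 ⟨(u : ℕ), h⟩
    rw [shufflePerm_apply, sF, dif_pos h]
    exact hc.symm.trans (congrArg σ (Fin.ext rfl))
  · have hc := congrFun key2 ⟨(u : ℕ) - k, by have := u.isLt; omega⟩
    rw [shufflePerm_apply, sF, dif_neg h]
    refine hc.symm.trans (congrArg σ (Fin.ext ?_))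
    show k + ((u : ℕ) - k) = (u : ℕ)
    omega

/-- The partial-fraction identity underlying the shuffle relation:
for positive integers `p 0, …, p (k+l-1)`,
`1/(p₁(p₁+p₂)⋯(p₁+⋯+p_k) · p_{k+1}⋯(p_{k+1}+⋯+p_{k+l}))`
equals the sum over `σ ∈ Σ_{k,l}` of the corresponding reshuffled partial-sum products. -/
theorem stmt_4 (k l : ℕ) (hk : 1 ≤ k) (hl : 1 ≤ l) (p : ℕ → ℕ)
    (hp : ∀ i < k + l, 0 < p i) :
    (1 : ℚ) / ((∏ i ∈ Finset.range k, ∑ j ∈ Finset.range (i + 1), (p j : ℚ)) *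
        (∏ i ∈ Finset.range l, ∑ j ∈ Finset.range (i + 1), (p (k + j) : ℚ)))
      = ∑ σ ∈ Finset.univ.filter (fun σ : Equiv.Perm (Fin (k + l)) =>
            ∀ i j : Fin (k + l), i < j → ((j : ℕ) < k ∨ k ≤ (i : ℕ)) → σ i < σ j),
          1 / ∏ i : Fin (k + l),
              ∑ j ∈ Finset.univ.filter (fun j : Fin (k + l) => j ≤ i),
                (p ((σ.symm j : Fin (k + l)) : ℕ) : ℚ) := by
  classical
  have ha : ∀ i < k, (0 : ℚ) < (p i : ℚ) := fun i hi => by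
    have := hp i (by omega); exact_mod_cast this
  have hb : ∀ i < l, (0 : ℚ) < (p (k + i) : ℚ) := fun i hi => by
    have := hp (k + i) (by omega); exact_mod_cast this
  have hmain : (∑ σ ∈ Finset.univ.filter (fun σ : Equiv.Perm (Fin (k + l)) =>
            ∀ i j : Fin (k + l), i < j → ((j : ℕ) < k ∨ k ≤ (i : ℕ)) → σ i < σ j),
          1 / ∏ i : Fin (k + l),
              ∑ j ∈ Finset.univ.filter (fun j : Fin (k + l) => j ≤ i),
                (p ((σ.symm j : Fin (k + l)) : ℕ) : ℚ))
      = ∑ A ∈ (Finset.range (k + l)).powersetCard k,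
          (∏ i ∈ Finset.range (k + l),
            (PS (fun t => (p t : ℚ)) ((A ∩ Finset.range (i + 1)).card)
              + PS (fun t => (p (k + t) : ℚ)) (i + 1 - (A ∩ Finset.range (i + 1)).card)))⁻¹ := by
    refine Finset.sum_bij' (fun σ _ => Aset k σ)
      (fun A hA => shufflePerm k l A
        (fun x hx => Finset.mem_range.1 ((Finset.mem_powersetCard.1 hA).1 hx))
        ((Finset.mem_powersetCard.1 hA).2)) ?_ ?_ ?_ ?_ ?_
    · intro σ hσ
      exact Aset_mem_powersetCard k l σ
    · intro A hA
      exact Finset.mem_filter.2 ⟨Finset.mem_univ _, shufflePerm_cond k l A _ _⟩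
    · intro σ hσ
      exact shufflePerm_eq k l σ (Finset.mem_filter.1 hσ).2 _ _
    · intro A hA
      exact shufflePerm_Aset k l A _ _
    · intro σ hσ
      rw [one_div]
      congr 1
      rw [← Fin.prod_univ_eq_prod_range
        (fun m => PS (fun t => (p t : ℚ)) ((Aset k σ ∩ Finset.range (m + 1)).card)
          + PS (fun t => (p (k + t) : ℚ)) (m + 1 - (Aset k σ ∩ Finset.range (m + 1)).card)) (k + l)]
      exact Finset.prod_congr rfl
        (fun i _ => bridge_term k l (fun t => (p t : ℚ)) σ (Finset.mem_filter.1 hσ).2 i)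
  rw [hmain, core (fun t => (p t : ℚ)) (fun t => (p (k + t) : ℚ)) (k + l) k l rfl ha hb, one_div, mul_inv]
  simp only [PS]
end

section
/- For any tuples of positive integers (k₁,…,k_r), (l₁,…,l_s) and any positive integer M, Σ_{0<m₁<⋯<m_r, 0<n₁<⋯<n_s, m_r+n_s<M} 1/(m₁^{k₁}⋯m_r^{k_r} n₁^{l₁}⋯n_s^{l_s}) = Z_M(z_{(k₁,…,k_r)} ⧢ z_{(l₁,…,l_s)}), where Z_M is the ℚ-linear map on the free noncommutative algebra with Z_M(z_{(h₁,…,h_u)}) = Σ_{0<n₁<⋯<n_u<M} 1/(n₁^{h₁}⋯n_u^{h_u}) and ⧢ is the shuffle product. -/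
/-- The shuffle product of two words, as a multiset of words. -/
def shuffle {α : Type*} : List α → List α → Multiset (List α)
  | [], ys => {ys}
  | x :: xs, [] => {x :: xs}
  | x :: xs, y :: ys =>
      ((shuffle xs (y :: ys)).map (fun w => x :: w))
        + ((shuffle (x :: xs) ys).map (fun w => y :: w))
termination_by xs ys => xs.length + ys.length

/-- `zetaMrev M [k_r, …, k_1] = Σ_{0<n₁<⋯<n_r<M} 1/(n₁^{k₁}⋯n_r^{k_r})`
(the index is given in reversed order). -/
def zetaMrev : ℕ → List ℕ → ℚ
  | _, [] => 1
  | M, k :: ks => ∑ n ∈ Finset.Ioo 0 M, zetaMrev n ks / (n : ℚ) ^ k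

/-- The truncated MZV `ζ_M(k₁,…,k_r)`. -/
def zetaM (M : ℕ) (ks : List ℕ) : ℚ := zetaMrev M ks.reverse

/-- Recover the index `(k₁,…,k_r)` from the word `z_{k₁}⋯z_{k_r}` over the
alphabet `{x,y}` (with `true = y`, `false = x`). -/
def toIndex (w : List Bool) : List ℕ :=
  w.foldl (fun acc b => if b then acc ++ [1] else acc.dropLast ++ [acc.getLastD 0 + 1]) []

/-- The word `z_{k₁}⋯z_{k_r} = (y x^{k₁-1})⋯(y x^{k_r-1})` (`true = y`, `false = x`). -/
def wordOf (ks : List ℕ) : List Bool :=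
  ks.foldr (fun k acc => (true :: List.replicate (k - 1) false) ++ acc) []

/-- `lastFixed a [k_r,…,k_1] = Σ_{0<m₁<⋯<m_r = a} 1/(m₁^{k₁}⋯m_r^{k_r})`
(sum with the largest summation variable fixed equal to `a`). -/
def lastFixed : ℕ → List ℕ → ℚ
  | a, [] => if a = 0 then 1 else 0
  | a, k :: ks => if 0 < a then zetaMrev a ks / (a : ℚ) ^ k else 0

/-! Read from the right, a word in `x, y` is an iterated sum taken from its largest variable
down, so both sides can be compared at a fixed value `m` of `m_r + n_s`. There the left side is
the Cauchy product of two sequences, and the partial fraction `1/(ab) = (1/a + 1/b)/m` for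
`a + b = m` splits the Cauchy product of two words into the Cauchy products in which one of the
words has lost its last letter (partial sums commute with Cauchy products). This is the
recursion of the shuffle product read from the right, so induction on the two words gives the
identity for each `m`, and summing over `m < M` gives `Z_M`. -/

section Shuffle

variable {α : Type*}

@[simp]
lemma shuffle_nil_left (ys : List α) : shuffle [] ys = {ys} := by
  rw [shuffle]

@[simp]
lemma shuffle_nil_right (xs : List α) : shuffle xs [] = {xs} := by
  cases xs <;> rw [shuffle]

lemma shuffle_cons_cons (x y : α) (xs ys : List α) :
    shuffle (x :: xs) (y :: ys)
      = (shuffle xs (y :: ys)).map (x :: ·) + (shuffle (x :: xs) ys).map (y :: ·) := by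
  rw [shuffle]

lemma shuffle_append_singleton (a b : α) (xs ys : List α) :
    shuffle (xs ++ [a]) (ys ++ [b])
      = (shuffle xs (ys ++ [b])).map (· ++ [a]) + (shuffle (xs ++ [a]) ys).map (· ++ [b]) := by
  induction xs generalizing ys with
  | nil =>
    induction ys with
    | nil => simp [shuffle_cons_cons, add_comm]
    | cons y ys ih =>
      rw [List.nil_append] at ih ⊢
      rw [List.cons_append, shuffle_cons_cons, ih, shuffle_cons_cons]
      simp only [Multiset.map_add, Multiset.map_map, Function.comp_def, shuffle_nil_left,
        Multiset.map_singleton, List.cons_append]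
      abel
  | cons x xs ihx =>
    induction ys with
    | nil =>
      have ih := ihx []
      rw [List.nil_append] at ih ⊢
      rw [List.cons_append, shuffle_cons_cons, ih, shuffle_cons_cons]
      simp only [Multiset.map_add, Multiset.map_map, Function.comp_def, shuffle_nil_right,
        Multiset.map_singleton, List.cons_append]
      abel
    | cons y ys ihy =>
      simp only [List.cons_append] at ihy ⊢
      rw [shuffle_cons_cons, ← List.cons_append (a := y) (as := ys) (bs := [b]), ihx, ihy,
        List.cons_append, shuffle_cons_cons]
      simp only [shuffle_cons_cons x y (xs ++ [a]), Multiset.map_add, Multiset.map_map,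
        Function.comp_def, List.cons_append]
      abel

lemma shuffle_reverse (xs ys : List α) :
    shuffle xs.reverse ys.reverse = (shuffle xs ys).map List.reverse := by
  induction xs, ys using shuffle.induct with
  | case1 ys => simp
  | case2 x xs => simp
  | case3 x xs y ys ihx ihy =>
    rw [List.reverse_cons, List.reverse_cons, shuffle_append_singleton, ← List.reverse_cons,
      ihx, ← List.reverse_cons, ihy, shuffle_cons_cons]
    simp [Multiset.map_map]

lemma head?_of_mem_shuffle {xs ys w : List α} (hw : w ∈ shuffle xs ys) :
    w.head? = xs.head? ∨ w.head? = ys.head? := by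
  match xs, ys with
  | [], _ => simp_all
  | _ :: _, [] => simp_all
  | x :: xs, y :: ys =>
    rw [shuffle_cons_cons, Multiset.mem_add, Multiset.mem_map, Multiset.mem_map] at hw
    rcases hw with ⟨w, -, rfl⟩ | ⟨w, -, rfl⟩ <;> simp

end Shuffle

open Finset

lemma Finset.sum_comm_multiset {ι κ β : Type*} [AddCommMonoid β] (s : Finset κ) (S : Multiset ι)
    (F : ι → κ → β) : ∑ k ∈ s, (S.map (F · k)).sum = (S.map fun i => ∑ k ∈ s, F i k).sum := by
  simp only [Finset.sum_eq_multiset_sum]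
  exact Multiset.sum_map_sum_map _ _

section Sequences

variable {R : Type*} [CommSemiring R]

def cauchyProduct (f g : ℕ → R) (m : ℕ) : R := ∑ p ∈ antidiagonal m, f p.1 * g p.2

lemma cauchyProduct_comm (f g : ℕ → R) : cauchyProduct f g = cauchyProduct g f := by
  ext m
  rw [cauchyProduct, cauchyProduct, ← Finset.Nat.sum_antidiagonal_swap]
  simp [mul_comm]

def letterOp : Bool → (ℕ → R) → ℕ → R
  | false, f, a => f a
  | true, f, a => ∑ c ∈ range a, f c

lemma letterOp_multiset_sum {ι : Type*} (b : Bool) (S : Multiset ι) (F : ι → ℕ → R) (m : ℕ) :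
    letterOp b (fun k => (S.map (F · k)).sum) m = (S.map fun i => letterOp b (F i) m).sum := by
  cases b
  · rfl
  · exact Finset.sum_comm_multiset _ _ _

lemma cauchyProduct_letterOp_right (b : Bool) (f g : ℕ → R) :
    cauchyProduct f (letterOp b g) = letterOp b (cauchyProduct f g) := by
  cases b
  · rfl
  ext m
  induction m with
  | zero => simp [cauchyProduct, letterOp]
  | succ m ih =>
    simp only [letterOp, cauchyProduct, Finset.Nat.sum_antidiagonal_succ', range_zero, sum_empty,
      mul_zero, zero_add, sum_range_succ, mul_add, sum_add_distrib] at ih ⊢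
    rw [ih]

lemma cauchyProduct_letterOp_left (b : Bool) (f g : ℕ → R) :
    cauchyProduct (letterOp b f) g = letterOp b (cauchyProduct f g) := by
  rw [cauchyProduct_comm, cauchyProduct_letterOp_right, cauchyProduct_comm]

lemma sum_range_sum_range_sub_mul (f g : ℕ → R) (M : ℕ) :
    ∑ a ∈ range M, ∑ b ∈ range (M - a), f a * g b = ∑ m ∈ range M, cauchyProduct f g m := by
  calc ∑ a ∈ range M, ∑ b ∈ range (M - a), f a * g b
      = cauchyProduct f (letterOp true g) M := by
        rw [cauchyProduct, Finset.Nat.sum_antidiagonal_eq_sum_range_succ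
          (fun a b => f a * letterOp true g b), sum_range_succ]
        simp [letterOp, mul_sum]
    _ = ∑ m ∈ range M, cauchyProduct f g m := by
        rw [cauchyProduct_letterOp_right]
        rfl

end Sequences

/-- Partial fractions `1/(ab) = (1/a + 1/b)/(a+b)` on the antidiagonal `a + b = m`. -/
lemma cauchyProduct_div_div {K : Type*} [Field K] [CharZero K] {f g : ℕ → K} (hf : f 0 = 0)
    (hg : g 0 = 0) (m : ℕ) :
    cauchyProduct (fun a => f a / a) (fun b => g b / b) m
      = (cauchyProduct (fun a => f a / a) g m + cauchyProduct f (fun b => g b / b) m) / m := by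
  simp only [cauchyProduct, ← sum_add_distrib, sum_div]
  refine sum_congr rfl fun p hp => ?_
  rw [HasAntidiagonal.mem_antidiagonal] at hp
  subst hp
  obtain ⟨a, b⟩ := p
  rcases Nat.eq_zero_or_pos a with rfl | ha
  · simp [hf]
  rcases Nat.eq_zero_or_pos b with rfl | hb
  · simp [hg]
  have ha' : (a : K) ≠ 0 := Nat.cast_ne_zero.mpr ha.ne'
  have hb' : (b : K) ≠ 0 := Nat.cast_ne_zero.mpr hb.ne'
  have hab : (a : K) + b ≠ 0 := by exact_mod_cast (by omega : a + b ≠ 0)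
  push_cast
  field_simp
  ring

/-- `lastFixedWord (z_𝐤).reverse a = lastFixed a 𝐤.reverse`: each letter contributes a factor
`1/a`, and `y` (`true`) moves on to a smaller variable `c < a`. Since `(0 : ℚ)⁻¹ = 0`, it
vanishes at `a = 0` on nonempty words. -/
def lastFixedWord : List Bool → ℕ → ℚ
  | [], a => if a = 0 then 1 else 0
  | b :: w, a => letterOp b (lastFixedWord w) a / a

lemma letterOp_lastFixedWord_zero {b : Bool} {w : List Bool}
    (h : (b :: w).getLast? ≠ some false) : letterOp b (lastFixedWord w) 0 = 0 := by
  match b, w with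
  | true, _ => simp [letterOp]
  | false, [] => simp at h
  | false, _ :: _ => simp [letterOp, lastFixedWord]

lemma cauchyProduct_lastFixedWord_nil_left (g : ℕ → ℚ) :
    cauchyProduct (lastFixedWord []) g = g := by
  ext m
  cases m <;> simp [cauchyProduct, lastFixedWord, Finset.Nat.sum_antidiagonal_succ]

theorem cauchyProduct_lastFixedWord {u v : List Bool} (hu : u.getLast? ≠ some false)
    (hv : v.getLast? ≠ some false) (m : ℕ) :
    cauchyProduct (lastFixedWord u) (lastFixedWord v) m
      = ((shuffle u v).map (lastFixedWord · m)).sum := by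
  induction u, v using shuffle.induct generalizing m with
  | case1 v => simp [cauchyProduct_lastFixedWord_nil_left]
  | case2 d u =>
    simp [cauchyProduct_comm _ (lastFixedWord []), cauchyProduct_lastFixedWord_nil_left]
  | case3 d u e v ihl ihr =>
    have hu' : u.getLast? ≠ some false := by
      cases u <;> simp_all
    have hv' : v.getLast? ≠ some false := by
      cases v <;> simp_all
    calc cauchyProduct (lastFixedWord (d :: u)) (lastFixedWord (e :: v)) m
        = (letterOp e (cauchyProduct (lastFixedWord (d :: u)) (lastFixedWord v)) m
            + letterOp d (cauchyProduct (lastFixedWord u) (lastFixedWord (e :: v))) m) / m := by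
          rw [← cauchyProduct_letterOp_right, ← cauchyProduct_letterOp_left]
          exact cauchyProduct_div_div (letterOp_lastFixedWord_zero hu)
            (letterOp_lastFixedWord_zero hv) m
      _ = ((shuffle (d :: u) (e :: v)).map (lastFixedWord · m)).sum := by
          rw [funext (ihr hu hv'), funext (ihl hu' hv), letterOp_multiset_sum,
            letterOp_multiset_sum, add_div, ← Multiset.sum_map_div, ← Multiset.sum_map_div,
            add_comm, shuffle_cons_cons, Multiset.map_add, Multiset.sum_add, Multiset.map_map,
            Multiset.map_map]
          rfl

lemma sum_range_lastFixed (ks : List ℕ) {M : ℕ} (hM : 0 < M) :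
    ∑ a ∈ range M, lastFixed a ks = zetaMrev M ks := by
  cases ks with
  | nil => simp [lastFixed, zetaMrev, hM]
  | cons k ks =>
    rw [zetaMrev, ← sum_filter_add_sum_filter_not (range M) (0 < ·)]
    simp only [lastFixed]
    rw [sum_ite_of_true (fun a ha => (mem_filter.mp ha).2),
      sum_ite_of_false (fun a ha => (mem_filter.mp ha).2), sum_const_zero, add_zero]
    congr 1
    ext a
    simp only [mem_filter, mem_range, mem_Ioo]
    omega

lemma lastFixedWord_replicate_false_append (j : ℕ) (w : List Bool) (a : ℕ) :
    lastFixedWord (List.replicate j false ++ w) a = lastFixedWord w a / (a : ℚ) ^ j := by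
  induction j with
  | zero => simp
  | succ j ih => rw [List.replicate_succ, List.cons_append, lastFixedWord, letterOp, ih,
      pow_succ, div_div]

lemma wordOf_nil : wordOf [] = [] := rfl

lemma wordOf_cons (k : ℕ) (ks : List ℕ) :
    wordOf (k :: ks) = true :: (List.replicate (k - 1) false ++ wordOf ks) := rfl

lemma wordOf_append (ks ls : List ℕ) : wordOf (ks ++ ls) = wordOf ks ++ wordOf ls := by
  induction ks with
  | nil => rfl
  | cons k ks ih =>
    rw [List.cons_append, wordOf_cons, wordOf_cons, ih, List.cons_append, List.append_assoc]

lemma lastFixedWord_reverse_wordOf {ks : List ℕ} (hks : ∀ k ∈ ks, 0 < k) (a : ℕ) :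
    lastFixedWord (wordOf ks).reverse a = lastFixed a ks.reverse := by
  induction ks using List.reverseRecOn generalizing a with
  | nil => rfl
  | append_singleton ks k ih =>
    have hk : 0 < k := hks k (by simp)
    have ih' := ih (fun l hl => hks l (by simp [hl]))
    have hword : (wordOf (ks ++ [k])).reverse
        = List.replicate (k - 1) false ++ true :: (wordOf ks).reverse := by
      simp [wordOf_append, wordOf_cons, wordOf_nil]
    rw [hword, lastFixedWord_replicate_false_append, List.reverse_append, List.reverse_singleton,
      List.singleton_append, lastFixed, lastFixedWord, letterOp, funext ih', div_div,
      ← pow_succ', Nat.sub_add_cancel hk]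
    split_ifs with ha
    · rw [sum_range_lastFixed _ ha]
    · simp [Nat.eq_zero_of_not_pos ha, hk.ne']

def toIndexStep (acc : List ℕ) (b : Bool) : List ℕ :=
  if b then acc ++ [1] else acc.dropLast ++ [acc.getLastD 0 + 1]

lemma toIndexStep_spec {acc : List ℕ} (hacc : acc ≠ []) (hpos : ∀ k ∈ acc, 0 < k) (b : Bool) :
    wordOf (toIndexStep acc b) = wordOf acc ++ [b] ∧ ∀ k ∈ toIndexStep acc b, 0 < k := by
  obtain ⟨init, j, rfl⟩ := (List.eq_nil_or_concat' acc).resolve_left hacc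
  have hj : 0 < j := hpos j (by simp)
  cases b
  · have hstep : toIndexStep (init ++ [j]) false = init ++ [j + 1] := by simp [toIndexStep]
    rw [hstep]
    refine ⟨?_, fun k hk => ?_⟩
    · obtain ⟨i, rfl⟩ := Nat.exists_eq_add_of_lt hj
      simp [wordOf_append, wordOf_cons, wordOf_nil, List.replicate_succ']
    · rcases List.mem_append.mp hk with hk | hk
      · exact hpos k (by simp [hk])
      · rw [List.mem_singleton.mp hk]
        exact j.succ_pos
  · refine ⟨by simp [toIndexStep, wordOf_append, wordOf_cons, wordOf_nil], fun k hk => ?_⟩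
    rcases List.mem_append.mp hk with hk | hk
    · exact hpos k hk
    · rw [List.mem_singleton.mp hk]
      exact Nat.one_pos

lemma toIndexStep_foldl_spec (w : List Bool) {acc : List ℕ} (hacc : acc ≠ [])
    (hpos : ∀ k ∈ acc, 0 < k) :
    wordOf (w.foldl toIndexStep acc) = wordOf acc ++ w ∧ ∀ k ∈ w.foldl toIndexStep acc, 0 < k := by
  induction w generalizing acc with
  | nil => simpa using hpos
  | cons b w ih =>
    obtain ⟨hword, hpos'⟩ := toIndexStep_spec hacc hpos b
    have hne : toIndexStep acc b ≠ [] := by cases b <;> simp [toIndexStep]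
    rw [List.foldl_cons, (ih hne hpos').1, hword, List.append_assoc, List.singleton_append]
    exact ⟨rfl, (ih hne hpos').2⟩

lemma toIndex_true_cons (w : List Bool) : toIndex (true :: w) = w.foldl toIndexStep [1] := rfl

lemma wordOf_toIndex {w : List Bool} (hw : w.head? ≠ some false) :
    wordOf (toIndex w) = w ∧ ∀ k ∈ toIndex w, 0 < k := by
  match w with
  | [] => simp [toIndex, wordOf_nil]
  | false :: _ => simp at hw
  | true :: w =>
    rw [toIndex_true_cons]
    simpa [wordOf_cons, wordOf_nil] using toIndexStep_foldl_spec w (acc := [1]) (by simp) (by simp)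

lemma head?_wordOf_ne_some_false (ks : List ℕ) : (wordOf ks).head? ≠ some false := by
  cases ks <;> simp [wordOf_nil, wordOf_cons]

lemma zetaM_toIndex {w : List Bool} (hw : w.head? ≠ some false) {M : ℕ} (hM : 0 < M) :
    zetaM M (toIndex w) = ∑ a ∈ range M, lastFixedWord w.reverse a := by
  obtain ⟨hword, hpos⟩ := wordOf_toIndex hw
  rw [zetaM, ← sum_range_lastFixed _ hM]
  simp only [← lastFixedWord_reverse_wordOf hpos, hword]

/-- Shuffle relation for the coupled truncated sum:
`Σ_{0<m₁<⋯<m_r, 0<n₁<⋯<n_s, m_r+n_s<M} 1/(m₁^{k₁}⋯m_r^{k_r} n₁^{l₁}⋯n_s^{l_s})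
  = Z_M(z_𝐤 ⧢ z_𝐥)`. -/
theorem stmt_5 (ks ls : List ℕ) (hks : ∀ k ∈ ks, 0 < k) (hls : ∀ l ∈ ls, 0 < l)
    (M : ℕ) (hM : 0 < M) :
    (∑ a ∈ Finset.range M, ∑ b ∈ Finset.range (M - a),
        lastFixed a ks.reverse * lastFixed b ls.reverse)
      = ((shuffle (wordOf ks) (wordOf ls)).map (fun w => zetaM M (toIndex w))).sum := by
  have hhead : ∀ w ∈ shuffle (wordOf ks) (wordOf ls), w.head? ≠ some false := fun w hw =>
    (head?_of_mem_shuffle hw).elim (· ▸ head?_wordOf_ne_some_false ks)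
      (· ▸ head?_wordOf_ne_some_false ls)
  calc (∑ a ∈ range M, ∑ b ∈ range (M - a), lastFixed a ks.reverse * lastFixed b ls.reverse)
      = ∑ m ∈ range M, cauchyProduct (lastFixedWord (wordOf ks).reverse)
          (lastFixedWord (wordOf ls).reverse) m := by
        simp only [← lastFixedWord_reverse_wordOf hks, ← lastFixedWord_reverse_wordOf hls,
          sum_range_sum_range_sub_mul]
    _ = ∑ m ∈ range M, ((shuffle (wordOf ks).reverse (wordOf ls).reverse).map
          (lastFixedWord · m)).sum := by
        simp only [List.getLast?_reverse, cauchyProduct_lastFixedWord,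
          head?_wordOf_ne_some_false, ne_eq, not_false_eq_true]
    _ = ((shuffle (wordOf ks) (wordOf ls)).map (fun w => zetaM M (toIndex w))).sum := by
        rw [sum_comm_multiset, shuffle_reverse, Multiset.map_map]
        exact congrArg _ (Multiset.map_congr rfl fun w hw => (zetaM_toIndex (hhead w hw) hM).symm)
end

section
/- For any positive integers k, l, M, the harmonic relation holds for *-truncated t-adic symmetric multiple zeta values in depth one: ζ*_{Ŝ,M}(k) · ζ*_{Ŝ,M}(l) = ζ*_{Ŝ,M}(k, l) + ζ*_{Ŝ,M}(l, k) + ζ*_{Ŝ,M}(k + l) in ℚ[[t]]. -/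
/-!
Write `ζ*_{Ŝ,M}(k) = A_k + B_k` with `A_k` the sum over `0 < n < M` and `B_k` the sum over
`-M < n < 0`. Each of `A_k A_l` and `B_k B_l` splits as the two strict triangular sums plus the
diagonal, and the diagonals add up to `ζ*_{Ŝ,M}(k + l)` because `x⁻ᵏ x⁻ˡ = x⁻⁽ᵏ⁺ˡ⁾` also for
the unit `x = n + t`. The mixed products `A_k B_l` and `B_k A_l` are the `i = 1` terms of the
depth-two values, and the triangular sums are their `i = 2` and `i = 0` terms.
-/

open PowerSeries

/-- Depth-one `*`-truncated t-adic symmetric MZV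
`ζ*_{Ŝ,M}(k) = Σ_{0<n<M} 1/n^k + Σ_{-M<n<0} 1/(n+t)^k ∈ ℚ[[t]]`. -/
noncomputable def zetaHatStar1 (M k : ℕ) : PowerSeries ℚ :=
  (∑ n ∈ Finset.Ioo 0 M, C (1 / (n : ℚ) ^ k))
    + ∑ m ∈ Finset.Ioo 0 M, ((C (-(m : ℚ)) + X) ^ k)⁻¹

/-- Depth-two `*`-truncated t-adic symmetric MZV `ζ*_{Ŝ,M}(k,l)`:
the sum of the terms `i = 2` (`0<n₁<n₂<M`), `i = 1` (`0<n₁<M`, `-M<n₂<0`) and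
`i = 0` (`-M<n₁<n₂<0`), writing negative variables as `-m` with `0<m<M`. -/
noncomputable def zetaHatStar2 (M k l : ℕ) : PowerSeries ℚ :=
  (∑ n2 ∈ Finset.Ioo 0 M, ∑ n1 ∈ Finset.Ioo 0 n2,
      C (1 / ((n1 : ℚ) ^ k * (n2 : ℚ) ^ l)))
    + (∑ n1 ∈ Finset.Ioo 0 M, ∑ m2 ∈ Finset.Ioo 0 M,
        C (1 / (n1 : ℚ) ^ k) * ((C (-(m2 : ℚ)) + X) ^ l)⁻¹)
    + (∑ m1 ∈ Finset.Ioo 0 M, ∑ m2 ∈ Finset.Ioo 0 m1,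
        ((C (-(m1 : ℚ)) + X) ^ k)⁻¹ * ((C (-(m2 : ℚ)) + X) ^ l)⁻¹)

open Finset

theorem sum_Ioo_mul_sum_Ioo {R : Type*} [CommSemiring R] (f g : ℕ → R) (M : ℕ) :
    (∑ i ∈ Ioo 0 M, f i) * ∑ j ∈ Ioo 0 M, g j
      = ∑ j ∈ Ioo 0 M, ∑ i ∈ Ioo 0 j, f i * g j + ∑ j ∈ Ioo 0 M, ∑ i ∈ Ioo 0 j, g i * f j
        + ∑ i ∈ Ioo 0 M, f i * g i := by
  induction M with
  | zero => simp
  | succ M ih =>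
    rcases M.eq_zero_or_pos with rfl | hM
    · simp [show Ioo 0 1 = ∅ from rfl]
    have hM' : M ∉ Ioo 0 M := by simp
    simp only [← sum_mul] at ih ⊢
    simp only [Ioo_add_one_right_eq_Ioc, ← Ioo_insert_right hM, sum_insert hM']
    rw [add_mul, mul_add, mul_add, ih]
    ring

noncomputable def posTerm (k n : ℕ) : PowerSeries ℚ := C (1 / (n : ℚ) ^ k)

noncomputable def negTerm (k m : ℕ) : PowerSeries ℚ := ((C (-(m : ℚ)) + X) ^ k)⁻¹

theorem posTerm_mul_posTerm (k l n : ℕ) : posTerm k n * posTerm l n = posTerm (k + l) n := by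
  simp only [posTerm, ← map_mul, pow_add, one_div, mul_inv]

theorem negTerm_mul_negTerm (k l m : ℕ) : negTerm k m * negTerm l m = negTerm (k + l) m := by
  rw [negTerm, negTerm, negTerm, pow_add, PowerSeries.mul_inv_rev, mul_comm]

theorem zetaHatStar1_eq (M k : ℕ) :
    zetaHatStar1 M k = ∑ n ∈ Ioo 0 M, posTerm k n + ∑ m ∈ Ioo 0 M, negTerm k m :=
  rfl

theorem zetaHatStar2_eq (M k l : ℕ) :
    zetaHatStar2 M k l
      = ∑ n2 ∈ Ioo 0 M, ∑ n1 ∈ Ioo 0 n2, posTerm k n1 * posTerm l n2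
        + (∑ n ∈ Ioo 0 M, posTerm k n) * ∑ m ∈ Ioo 0 M, negTerm l m
        + ∑ m1 ∈ Ioo 0 M, ∑ m2 ∈ Ioo 0 m1, negTerm l m2 * negTerm k m1 := by
  simp only [zetaHatStar2, sum_mul_sum, posTerm, negTerm, ← map_mul, one_div, mul_inv,
    mul_comm (((C _ + X) ^ l)⁻¹)]

theorem stmt_7_general (k l M : ℕ) :
    zetaHatStar1 M k * zetaHatStar1 M l
      = zetaHatStar2 M k l + zetaHatStar2 M l k + zetaHatStar1 M (k + l) := by
  simp only [zetaHatStar1_eq, zetaHatStar2_eq, ← posTerm_mul_posTerm, ← negTerm_mul_negTerm]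
  linear_combination sum_Ioo_mul_sum_Ioo (posTerm k) (posTerm l) M
    + sum_Ioo_mul_sum_Ioo (negTerm k) (negTerm l) M

/-- Depth-one harmonic relation for `*`-truncated t-adic symmetric MZVs:
`ζ*_{Ŝ,M}(k) ζ*_{Ŝ,M}(l) = ζ*_{Ŝ,M}(k,l) + ζ*_{Ŝ,M}(l,k) + ζ*_{Ŝ,M}(k+l)`. -/
theorem stmt_7 (k l M : ℕ) (hk : 0 < k) (hl : 0 < l) (hM : 0 < M) :
    zetaHatStar1 M k * zetaHatStar1 M l
      = zetaHatStar2 M k l + zetaHatStar2 M l k + zetaHatStar1 M (k + l) :=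
  stmt_7_general k l M
end

section
/- For every positive integer l and every positive integer M, the shuffle relation in the case 𝐤 = ∅ reads: ζ^{⧢}_{Ŝ,M}(l) = (-1)^l Σ_{l' ≥ 0} C(l+l'-1, l') ζ^{⧢}_{Ŝ,M}(l + l') t^{l'} in ℚ[[t]]. -/
open PowerSeries

/-- Depth-one `⧢`-truncated t-adic symmetric MZV
`ζ^⧢_{Ŝ,M}(k) = Σ_{0<n<M} 1/n^k + Σ_{-M<n<0} 1/(n+t)^k ∈ ℚ[[t]]`. -/
noncomputable def zetaHatSh1 (M k : ℕ) : PowerSeries ℚ :=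
  (∑ n ∈ Finset.Ioo 0 M, C (1 / (n : ℚ) ^ k))
    + ∑ m ∈ Finset.Ioo 0 M, ((C (-(m : ℚ)) + X) ^ k)⁻¹

/-!
Group the summands for `n` and `-n`: with `c(l, j) = C(l+j-1, j)`, the binomial series of
`(1 - x)^(-l)` gives
`(t - q)^(-l) = (-1)^l Σ_j c(l, j) t^j q^(-l-j)` and `q^(-l) = (-1)^l Σ_j c(l, j) t^j (t - q)^(-l-j)`,
so the transform `F ↦ (-1)^l Σ_j c(l, j) t^j F(l + j)` exchanges the two halves of each pair
and hence fixes their sum. Coefficientwise, the second expansion is the convolution identity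
`Σ_j (-1)^j c(l, j) C(l+n-1, n-j) = [n = 0]`, read off from `(1+t)^(-l) (1+t)^(l+n-1) = (1+t)^(n-1)`.
-/

namespace PowerSeries

theorem coeff_invOneSubPow_val (S : Type*) [CommRing S] (d n : ℕ) :
    coeff n (invOneSubPow S d).val = ((d + n - 1).choose n : S) := by
  cases d with
  | zero =>
    rcases n with _ | n
    · simp [invOneSubPow_zero]
    · simp [invOneSubPow_zero, coeff_one]
  | succ d =>
    rw [invOneSubPow_val_succ_eq_mk_add_choose, coeff_mk, Nat.choose_symm_add,
      Nat.add_right_comm, Nat.add_sub_cancel]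

theorem coeff_one_add_X_pow (R : Type*) [Semiring R] (N n : ℕ) :
    coeff n ((1 + X : R⟦X⟧) ^ N) = (N.choose n : R) := by
  rw [← Polynomial.coeff_one_add_X_pow R N n, ← Polynomial.coeff_coe]
  simp

theorem rescale_neg_one_one_sub_X (R : Type*) [CommRing R] :
    rescale (-1 : R) (1 - X) = 1 + X := by
  simp [rescale_X, sub_eq_add_neg]

variable {K : Type*} [Field K]

theorem C_add_X_eq_C_mul_rescale {a : K} (ha : a ≠ 0) :
    C a + X = C a * rescale (-a⁻¹) (1 - X) := by
  rw [map_sub, map_one, rescale_X, mul_sub, mul_one, ← mul_assoc, ← map_mul, mul_neg,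
    mul_inv_cancel₀ ha, map_neg, map_one, neg_one_mul, sub_neg_eq_add]

theorem inv_C_add_X_pow {a : K} (ha : a ≠ 0) (k : ℕ) :
    ((C a + X) ^ k)⁻¹ = C (a⁻¹ ^ k) * rescale (-a⁻¹) (invOneSubPow K k).val := by
  rw [PowerSeries.inv_eq_iff_mul_eq_one (by simp [ha]), C_add_X_eq_C_mul_rescale ha, mul_pow,
    ← map_pow, ← map_pow, ← invOneSubPow_inv_eq_one_sub_pow, mul_mul_mul_comm, ← map_mul,
    ← map_mul, Units.val_inv, ← mul_pow, inv_mul_cancel₀ ha]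
  simp

theorem coeff_inv_C_add_X_pow {a : K} (ha : a ≠ 0) (k j : ℕ) :
    coeff j ((C a + X) ^ k)⁻¹ = a⁻¹ ^ k * (-a⁻¹) ^ j * ((k + j - 1).choose j : K) := by
  rw [inv_C_add_X_pow ha, coeff_C_mul, coeff_rescale, coeff_invOneSubPow_val, mul_assoc]

end PowerSeries

theorem sum_range_neg_one_pow_mul_choose_mul_choose (l n : ℕ) :
    ∑ j ∈ Finset.range (n + 1),
      (-1 : ℤ) ^ j * (l + j - 1).choose j * (l + n - 1).choose (n - j) =
      if n = 0 then 1 else 0 := by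
  rcases Nat.eq_zero_or_pos n with rfl | hn
  · simp
  have hinv : rescale (-1 : ℤ) (invOneSubPow ℤ l).val * (1 + X) ^ l = 1 := by
    rw [← rescale_neg_one_one_sub_X, ← map_pow, ← map_mul, ← invOneSubPow_inv_eq_one_sub_pow,
      Units.val_inv, map_one]
  have hprod : rescale (-1 : ℤ) (invOneSubPow ℤ l).val * (1 + X) ^ (l + n - 1) =
      (1 + X) ^ (n - 1) := by
    rw [show l + n - 1 = l + (n - 1) by omega, pow_add, ← mul_assoc, hinv, one_mul]
  have hcoeff := congrArg (coeff n) hprod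
  rw [coeff_mul, Finset.Nat.sum_antidiagonal_eq_sum_range_succ_mk] at hcoeff
  simp only [coeff_rescale, coeff_invOneSubPow_val, coeff_one_add_X_pow] at hcoeff
  rw [hcoeff, Nat.choose_eq_zero_of_lt (by omega), if_neg hn.ne']
  simp

section

variable {K : Type*} [Field K]

/-- The coefficient of `t^n` in `(-1)^l Σ_{j ≥ 0} C(l+j-1, j) F(l+j) t^j`. -/
noncomputable def shuffleCoeff (F : ℕ → K⟦X⟧) (l n : ℕ) : K :=
  (-1) ^ l * ∑ j ∈ Finset.range (n + 1), ((l + j - 1).choose j : K) * coeff (n - j) (F (l + j))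

theorem shuffleCoeff_sum {ι : Type*} (s : Finset ι) (F : ι → ℕ → K⟦X⟧) (l n : ℕ) :
    shuffleCoeff (fun k ↦ ∑ i ∈ s, F i k) l n = ∑ i ∈ s, shuffleCoeff (F i) l n := by
  simp only [shuffleCoeff, map_sum, Finset.mul_sum]
  exact Finset.sum_comm

theorem shuffleCoeff_add (F G : ℕ → K⟦X⟧) (l n : ℕ) :
    shuffleCoeff (fun k ↦ F k + G k) l n = shuffleCoeff F l n + shuffleCoeff G l n := by
  simp only [shuffleCoeff, map_add, mul_add, Finset.sum_add_distrib]

variable {q : K}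

theorem coeff_inv_C_neg_add_X_pow_eq_shuffleCoeff (hq : q ≠ 0) (l n : ℕ) :
    coeff n ((C (-q) + X) ^ l)⁻¹ = shuffleCoeff (fun k ↦ C (1 / q ^ k)) l n := by
  rw [shuffleCoeff, Finset.sum_eq_single_of_mem n (Finset.self_mem_range_succ n)
    fun j hj hjn ↦ by rw [coeff_C, if_neg (by rw [Finset.mem_range] at hj; omega), mul_zero]]
  rw [coeff_inv_C_add_X_pow (neg_ne_zero.mpr hq), Nat.sub_self, coeff_zero_C, inv_neg, neg_neg,
    neg_pow, one_div]
  ring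

theorem coeff_C_one_div_pow_eq_shuffleCoeff (hq : q ≠ 0) (l n : ℕ) :
    coeff n (C (1 / q ^ l)) = shuffleCoeff (fun k ↦ ((C (-q) + X) ^ k)⁻¹) l n := by
  have hterm : ∀ j ∈ Finset.range (n + 1),
      ((l + j - 1).choose j : K) * coeff (n - j) ((C (-q) + X) ^ (l + j))⁻¹ =
        (-1) ^ l * q⁻¹ ^ (l + n) *
          ((-1) ^ j * (l + j - 1).choose j * (l + n - 1).choose (n - j) : ℤ) := by
    intro j hj
    obtain ⟨i, rfl⟩ := Nat.exists_eq_add_of_le (Nat.lt_succ_iff.mp (Finset.mem_range.mp hj))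
    rw [coeff_inv_C_add_X_pow (neg_ne_zero.mpr hq), inv_neg, neg_neg, neg_pow,
      Nat.add_sub_cancel_left, ← add_assoc]
    push_cast
    ring
  rw [shuffleCoeff, Finset.sum_congr rfl hterm, ← Finset.mul_sum, ← Int.cast_sum,
    sum_range_neg_one_pow_mul_choose_mul_choose, coeff_C, ← mul_assoc, ← mul_assoc,
    ← mul_pow, neg_one_mul, neg_neg, one_pow, one_mul]
  split_ifs with hn
  · simp [hn]
  · simp

noncomputable def zetaPair (q : K) (k : ℕ) : K⟦X⟧ := C (1 / q ^ k) + ((C (-q) + X) ^ k)⁻¹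

theorem coeff_zetaPair_eq_shuffleCoeff (hq : q ≠ 0) (l n : ℕ) :
    coeff n (zetaPair q l) = shuffleCoeff (zetaPair q) l n := by
  rw [zetaPair, map_add, coeff_C_one_div_pow_eq_shuffleCoeff hq,
    coeff_inv_C_neg_add_X_pow_eq_shuffleCoeff hq, add_comm, ← shuffleCoeff_add]
  rfl

end

theorem zetaHatSh1_eq_sum_zetaPair (M : ℕ) :
    zetaHatSh1 M = fun k ↦ ∑ m ∈ Finset.Ioo 0 M, zetaPair (m : ℚ) k := by
  ext1 k
  rw [zetaHatSh1, ← Finset.sum_add_distrib]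
  rfl

theorem stmt_11_general (l M : ℕ) :
    ∀ n : ℕ,
      (coeff n) (zetaHatSh1 M l)
        = (-1 : ℚ) ^ l * ∑ l' ∈ Finset.range (n + 1),
            (((l + l' - 1).choose l' : ℕ) : ℚ) * (coeff (n - l')) (zetaHatSh1 M (l + l')) := by
  intro n
  change _ = shuffleCoeff (zetaHatSh1 M) l n
  simp only [zetaHatSh1_eq_sum_zetaPair, map_sum, shuffleCoeff_sum]
  refine Finset.sum_congr rfl fun m hm ↦ coeff_zetaPair_eq_shuffleCoeff ?_ l n
  exact Nat.cast_ne_zero.mpr (Finset.mem_Ioo.mp hm).1.ne'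

/-- The shuffle relation with `𝐤 = ∅`:
`ζ^⧢_{Ŝ,M}(l) = (-1)^l Σ_{l'≥0} C(l+l'-1,l') ζ^⧢_{Ŝ,M}(l+l') t^{l'}`,
stated coefficientwise (the coefficient of `t^n` of the right-hand side is a
finite sum since each term carries a factor `t^{l'}`). -/
theorem stmt_11 (l M : ℕ) (hl : 0 < l) (hM : 0 < M) :
    ∀ n : ℕ,
      (coeff n) (zetaHatSh1 M l)
        = (-1 : ℚ) ^ l * ∑ l' ∈ Finset.range (n + 1),
            (((l + l' - 1).choose l' : ℕ) : ℚ) * (coeff (n - l')) (zetaHatSh1 M (l + l')) :=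
  stmt_11_general l M
end

section
/- For positive integers k₁, k₂ and M ≥ 1, the root-change relation at t = 0 holds: Σ_{a+b=k₁+k₂, a,b≥1} (C(b-1, b-k₁) + C(b-1, b-k₂)) ζ^{⧢}_{S,M}(a, b) = (-1)^{k₁} ζ^{⧢}_{S,M}(k₂, k₁), where ζ^{⧢}_{S,M}(h₁,h₂) := Σ_{0<n₁<n₂<M} 1/(n₁^{h₁} n₂^{h₂}) + Σ_{0<n₁, n₂<0, n₁-n₂<M} 1/(n₁^{h₁} n₂^{h₂}) + Σ_{n₁<n₂<0, -n₁<M} 1/(n₁^{h₁} n₂^{h₂}). -/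
open Finset

def cfQ (m b : ℕ) : ℚ := if m ≤ b then (((b - 1).choose (b - m) : ℕ) : ℚ) else 0

lemma cfQ_pascal (m b : ℕ) (hm : 1 ≤ m) (hb : 2 ≤ b) :
    cfQ m b = cfQ m (b - 1) + cfQ (m - 1) (b - 1) := by
  obtain ⟨b', rfl⟩ : ∃ b', b = b' + 2 := ⟨b - 2, by omega⟩
  obtain ⟨m', rfl⟩ : ∃ m', m = m' + 1 := ⟨m - 1, by omega⟩
  unfold cfQ
  rcases le_or_gt m' b' with h | h
  · rw [if_pos (by omega), if_pos (by omega), if_pos (by omega)]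
    norm_cast
    have e1 : b' + 2 - 1 = b' + 1 := by omega
    have e2 : b' + 2 - (m' + 1) = (b' - m') + 1 := by omega
    rw [e1, e2]
    have e3 : b' + 1 - 1 = b' := by omega
    have e4 : b' + 1 - (m' + 1) = b' - m' := by omega
    have e5 : b' + 1 - (m' + 1 - 1) = (b' - m') + 1 := by omega
    rw [e3, e4, e5]
    exact Nat.choose_succ_succ b' (b' - m')
  · rcases le_or_gt (m' + 1) (b' + 2) with h2 | h2
    · -- m = b case : m' + 1 = b' + 2
      have hmb : m' = b' + 1 := by omega
      subst hmb
      rw [if_pos (by omega), if_neg (by omega), if_pos (by omega)]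
      norm_num
    · rw [if_neg (by omega), if_neg (by omega), if_neg (by omega)]
      norm_num

lemma cfQ_self (m : ℕ) (hm : 1 ≤ m) : cfQ m m = 1 := by
  unfold cfQ; rw [if_pos le_rfl]; simp

lemma cfQ_of_lt (m b : ℕ) (h : b < m) : cfQ m b = 0 := by
  unfold cfQ; rw [if_neg (by omega)]

lemma cfQ_zero (b : ℕ) (hb : 1 ≤ b) : cfQ 0 b = 0 := by
  unfold cfQ; rw [if_pos (by omega)]
  norm_cast
  exact Nat.choose_eq_zero_of_lt (by omega)

lemma pf : ∀ K : ℕ, ∀ j k : ℕ, 1 ≤ j → 1 ≤ k → j + k = K →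
    ∀ x y : ℚ, x ≠ 0 → y ≠ 0 → x + y ≠ 0 →
    ∑ a ∈ Ioo 0 K, (cfQ k (K - a) / (x ^ a * (x + y) ^ (K - a))
      + cfQ j (K - a) / (y ^ a * (x + y) ^ (K - a))) = 1 / (x ^ j * y ^ k) := by
  intro K
  induction K using Nat.strong_induction_on with
  | _ K ih =>
  intro j k hj hk hjk x y hx hy hs
  have hK2 : 2 ≤ K := by omega
  have hsplit : ∑ a ∈ Ioo 0 K, (cfQ k (K - a) / (x ^ a * (x + y) ^ (K - a))
        + cfQ j (K - a) / (y ^ a * (x + y) ^ (K - a)))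
      = (∑ a ∈ Ioo 0 (K-1), (cfQ k (K - a) / (x ^ a * (x + y) ^ (K - a))
        + cfQ j (K - a) / (y ^ a * (x + y) ^ (K - a))))
      + (cfQ k 1 / (x ^ (K-1) * (x + y) ^ 1)
        + cfQ j 1 / (y ^ (K-1) * (x + y) ^ 1)) := by
    have h1 : Ioo 0 K = insert (K-1) (Ioo 0 (K-1)) := by
      ext t; simp only [mem_Ioo, mem_insert]; omega
    rw [h1, Finset.sum_insert (by simp), add_comm,
      show K - (K-1) = 1 from by omega]
  rw [hsplit]
  have hterm : ∀ a ∈ Ioo 0 (K-1),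
      cfQ k (K - a) / (x ^ a * (x + y) ^ (K - a)) + cfQ j (K - a) / (y ^ a * (x + y) ^ (K - a))
      = ((cfQ k ((K-1) - a) / (x ^ a * (x + y) ^ ((K-1) - a))
          + cfQ (j-1) ((K-1) - a) / (y ^ a * (x + y) ^ ((K-1) - a)))
        + (cfQ (k-1) ((K-1) - a) / (x ^ a * (x + y) ^ ((K-1) - a))
          + cfQ j ((K-1) - a) / (y ^ a * (x + y) ^ ((K-1) - a)))) / (x + y) := by
    intro a ha
    rw [mem_Ioo] at ha
    have hb2 : 2 ≤ K - a := by omega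
    have ek : cfQ k (K - a) = cfQ k ((K-1) - a) + cfQ (k-1) ((K-1) - a) := by
      have h := cfQ_pascal k (K - a) hk hb2
      rwa [show K - a - 1 = (K-1) - a from by omega] at h
    have ej : cfQ j (K - a) = cfQ j ((K-1) - a) + cfQ (j-1) ((K-1) - a) := by
      have h := cfQ_pascal j (K - a) hj hb2
      rwa [show K - a - 1 = (K-1) - a from by omega] at h
    have ep : (x + y) ^ (K - a) = (x + y) ^ ((K-1) - a) * (x + y) := by
      rw [← pow_succ]
      congr 1; omega
    rw [ek, ej, ep]
    have h1 : x ^ a ≠ 0 := pow_ne_zero _ hx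
    have h2 : y ^ a ≠ 0 := pow_ne_zero _ hy
    have h3 : (x + y) ^ ((K-1) - a) ≠ 0 := pow_ne_zero _ hs
    field_simp
    ring
  rw [Finset.sum_congr rfl hterm, ← Finset.sum_div, Finset.sum_add_distrib]
  by_cases hj1 : j = 1
  · subst hj1
    by_cases hk1 : k = 1
    · subst hk1
      have hK : K = 2 := by omega
      subst hK
      have he : Ioo (0:ℕ) (2-1) = ∅ := rfl
      rw [he, Finset.sum_empty, Finset.sum_empty, cfQ_self 1 le_rfl]
      norm_num
      field_simp
      ring
    · -- j = 1, k ≥ 2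
      have hk2 : 2 ≤ k := by omega
      have hT1 : (∑ a ∈ Ioo 0 (K-1), (cfQ k ((K-1) - a) / (x ^ a * (x + y) ^ ((K-1) - a))
          + cfQ (1-1) ((K-1) - a) / (y ^ a * (x + y) ^ ((K-1) - a)))) = 0 := by
        apply Finset.sum_eq_zero
        intro a ha
        rw [mem_Ioo] at ha
        rw [cfQ_of_lt k ((K-1) - a) (by omega),
          show (1:ℕ) - 1 = 0 from rfl, cfQ_zero ((K-1) - a) (by omega)]
        simp
      have hT2 := ih (K-1) (by omega) 1 (k-1) le_rfl (by omega) (by omega) x y hx hy hs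
      rw [hT1, hT2, cfQ_of_lt k 1 (by omega), cfQ_self 1 le_rfl]
      have hyk : y ^ (K-1) = y ^ (k-1) * y := by
        rw [← pow_succ]; congr 1; omega
      have hyk2 : y ^ k = y ^ (k-1) * y := by
        rw [← pow_succ]; congr 1; omega
      rw [hyk, hyk2, pow_one, pow_one]
      have h2 : y ^ (k-1) ≠ 0 := pow_ne_zero _ hy
      field_simp
      ring
  · by_cases hk1 : k = 1
    · subst hk1
      have hj2 : 2 ≤ j := by omega
      have hT2 : (∑ a ∈ Ioo 0 (K-1), (cfQ (1-1) ((K-1) - a) / (x ^ a * (x + y) ^ ((K-1) - a))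
          + cfQ j ((K-1) - a) / (y ^ a * (x + y) ^ ((K-1) - a)))) = 0 := by
        apply Finset.sum_eq_zero
        intro a ha
        rw [mem_Ioo] at ha
        rw [cfQ_of_lt j ((K-1) - a) (by omega),
          show (1:ℕ) - 1 = 0 from rfl, cfQ_zero ((K-1) - a) (by omega)]
        simp
      have hT1 := ih (K-1) (by omega) (j-1) 1 (by omega) le_rfl (by omega) x y hx hy hs
      rw [hT2, hT1, cfQ_of_lt j 1 (by omega), cfQ_self 1 le_rfl]
      have hxj : x ^ (K-1) = x ^ (j-1) * x := by
        rw [← pow_succ]; congr 1; omega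
      have hxj2 : x ^ j = x ^ (j-1) * x := by
        rw [← pow_succ]; congr 1; omega
      rw [hxj, hxj2, pow_one, pow_one]
      have h2 : x ^ (j-1) ≠ 0 := pow_ne_zero _ hx
      field_simp
      ring
    · -- j ≥ 2, k ≥ 2
      have hT1 := ih (K-1) (by omega) (j-1) k (by omega) hk (by omega) x y hx hy hs
      have hT2 := ih (K-1) (by omega) j (k-1) (by omega) (by omega) (by omega) x y hx hy hs
      rw [hT1, hT2, cfQ_of_lt j 1 (by omega), cfQ_of_lt k 1 (by omega)]
      have hxj : x ^ j = x ^ (j-1) * x := by rw [← pow_succ]; congr 1; omega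
      have hyk : y ^ k = y ^ (k-1) * y := by rw [← pow_succ]; congr 1; omega
      rw [hxj, hyk]
      have h1 : x ^ (j-1) ≠ 0 := pow_ne_zero _ hx
      have h2 : y ^ (k-1) ≠ 0 := pow_ne_zero _ hy
      field_simp
      ring

set_option maxHeartbeats 1600000 in
lemma symkey (k1 k2 : ℕ) (h1 : 1 ≤ k1) (h2 : 1 ≤ k2) (x y s : ℚ)
    (hsum : x + y = s) (hx : x ≠ 0) (hy : y ≠ 0) (hs : s ≠ 0) :
    (∑ a ∈ Ioo 0 (k1+k2), (cfQ k1 (k1+k2-a) + cfQ k2 (k1+k2-a)) *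
        (1/(x^a * s^(k1+k2-a)) + 1/(x^a * (-y)^(k1+k2-a)) + 1/((-s)^a * (-x)^(k1+k2-a))))
    + (∑ a ∈ Ioo 0 (k1+k2), (cfQ k1 (k1+k2-a) + cfQ k2 (k1+k2-a)) *
        (1/(y^a * s^(k1+k2-a)) + 1/(y^a * (-x)^(k1+k2-a)) + 1/((-s)^a * (-y)^(k1+k2-a))))
    = (-1:ℚ)^k1 * (1/(x^k2 * s^k1) + 1/(x^k2 * (-y)^k1) + 1/((-s)^k2 * (-x)^k1))
    + (-1:ℚ)^k1 * (1/(y^k2 * s^k1) + 1/(y^k2 * (-x)^k1) + 1/((-s)^k2 * (-y)^k1)) := by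
  subst hsum
  have hns : (-(x+y)) ≠ 0 := neg_ne_zero.2 hs
  have P1 := pf (k1+k2) k1 k2 h1 h2 rfl x y hx hy hs
  have P2 := pf (k1+k2) k2 k1 h2 h1 (by omega) x y hx hy hs
  have P3 := pf (k1+k2) k1 k2 h1 h2 rfl x (-(x+y)) hx hns
    (by rw [show x + -(x+y) = -y from by ring]; exact neg_ne_zero.2 hy)
  rw [show x + -(x+y) = -y from by ring] at P3
  have P4 := pf (k1+k2) k2 k1 h2 h1 (by omega) x (-(x+y)) hx hns
    (by rw [show x + -(x+y) = -y from by ring]; exact neg_ne_zero.2 hy)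
  rw [show x + -(x+y) = -y from by ring] at P4
  have P5 := pf (k1+k2) k1 k2 h1 h2 rfl (-(x+y)) y hns hy
    (by rw [show -(x+y) + y = -x from by ring]; exact neg_ne_zero.2 hx)
  rw [show -(x+y) + y = -x from by ring] at P5
  have P6 := pf (k1+k2) k2 k1 h2 h1 (by omega) (-(x+y)) y hns hy
    (by rw [show -(x+y) + y = -x from by ring]; exact neg_ne_zero.2 hx)
  rw [show -(x+y) + y = -x from by ring] at P6
  have hcomb : (∑ a ∈ Ioo 0 (k1+k2), (cfQ k1 (k1+k2-a) + cfQ k2 (k1+k2-a)) *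
        (1/(x^a * (x+y)^(k1+k2-a)) + 1/(x^a * (-y)^(k1+k2-a)) + 1/((-(x+y))^a * (-x)^(k1+k2-a))))
      + (∑ a ∈ Ioo 0 (k1+k2), (cfQ k1 (k1+k2-a) + cfQ k2 (k1+k2-a)) *
        (1/(y^a * (x+y)^(k1+k2-a)) + 1/(y^a * (-x)^(k1+k2-a)) + 1/((-(x+y))^a * (-y)^(k1+k2-a))))
      = (∑ a ∈ Ioo 0 (k1+k2), (cfQ k2 (k1+k2-a) / (x^a * (x+y)^(k1+k2-a))
            + cfQ k1 (k1+k2-a) / (y^a * (x+y)^(k1+k2-a))))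
        + (∑ a ∈ Ioo 0 (k1+k2), (cfQ k1 (k1+k2-a) / (x^a * (x+y)^(k1+k2-a))
            + cfQ k2 (k1+k2-a) / (y^a * (x+y)^(k1+k2-a))))
        + (∑ a ∈ Ioo 0 (k1+k2), (cfQ k2 (k1+k2-a) / (x^a * (-y)^(k1+k2-a))
            + cfQ k1 (k1+k2-a) / ((-(x+y))^a * (-y)^(k1+k2-a))))
        + (∑ a ∈ Ioo 0 (k1+k2), (cfQ k1 (k1+k2-a) / (x^a * (-y)^(k1+k2-a))
            + cfQ k2 (k1+k2-a) / ((-(x+y))^a * (-y)^(k1+k2-a))))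
        + (∑ a ∈ Ioo 0 (k1+k2), (cfQ k2 (k1+k2-a) / ((-(x+y))^a * (-x)^(k1+k2-a))
            + cfQ k1 (k1+k2-a) / (y^a * (-x)^(k1+k2-a))))
        + (∑ a ∈ Ioo 0 (k1+k2), (cfQ k1 (k1+k2-a) / ((-(x+y))^a * (-x)^(k1+k2-a))
            + cfQ k2 (k1+k2-a) / (y^a * (-x)^(k1+k2-a)))) := by
    rw [← Finset.sum_add_distrib, ← Finset.sum_add_distrib, ← Finset.sum_add_distrib,
      ← Finset.sum_add_distrib, ← Finset.sum_add_distrib, ← Finset.sum_add_distrib]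
    exact Finset.sum_congr rfl (fun a _ => by ring)
  rw [hcomb, P1, P2, P3, P4, P5, P6]
  have n1 : x ^ k1 ≠ 0 := pow_ne_zero _ hx
  have n2 : x ^ k2 ≠ 0 := pow_ne_zero _ hx
  have n3 : y ^ k1 ≠ 0 := pow_ne_zero _ hy
  have n4 : y ^ k2 ≠ 0 := pow_ne_zero _ hy
  have n5 : (x+y) ^ k1 ≠ 0 := pow_ne_zero _ hs
  have n6 : (x+y) ^ k2 ≠ 0 := pow_ne_zero _ hs
  rcases Nat.even_or_odd k1 with e1 | e1 <;> rcases Nat.even_or_odd k2 with e2 | e2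
  · simp only [e1.neg_pow, e2.neg_pow, e1.neg_one_pow]
    field_simp
    ring
  · simp only [e1.neg_pow, e2.neg_pow, e1.neg_one_pow]
    field_simp
    ring
  · simp only [e1.neg_pow, e2.neg_pow, e1.neg_one_pow]
    field_simp
    ring
  · simp only [e1.neg_pow, e2.neg_pow, e1.neg_one_pow]
    field_simp
    ring

/-- The `t = 0` specialization of the `⧢`-truncated t-adic symmetric double zeta
value: `ζ^⧢_{S,M}(h₁,h₂) = Σ_{0<n₁<n₂<M} 1/(n₁^{h₁}n₂^{h₂})
+ Σ_{0<n₁, n₂<0, n₁-n₂<M} 1/(n₁^{h₁}n₂^{h₂})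
+ Σ_{n₁<n₂<0, -n₁<M} 1/(n₁^{h₁}n₂^{h₂})`,
with negative variables written as `-m`, `m > 0`. -/
def zetaShS2 (M h1 h2 : ℕ) : ℚ :=
  (∑ n2 ∈ Finset.Ioo 0 M, ∑ n1 ∈ Finset.Ioo 0 n2, 1 / ((n1 : ℚ) ^ h1 * (n2 : ℚ) ^ h2))
    + (∑ n1 ∈ Finset.Ioo 0 M, ∑ m2 ∈ Finset.Ioo 0 (M - n1),
        1 / ((n1 : ℚ) ^ h1 * (-(m2 : ℚ)) ^ h2))
    + (∑ m1 ∈ Finset.Ioo 0 M, ∑ m2 ∈ Finset.Ioo 0 m1,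
        1 / ((-(m1 : ℚ)) ^ h1 * (-(m2 : ℚ)) ^ h2))

lemma zeta_one (a b : ℕ) : zetaShS2 1 a b = 0 := by
  unfold zetaShS2
  rw [show Finset.Ioo (0:ℕ) 1 = ∅ by decide]
  simp

lemma sum_Ioo_split (M : ℕ) (hM : 1 ≤ M) (f : ℕ → ℚ) :
    ∑ a ∈ Ioo 0 (M+1), f a = (∑ a ∈ Ioo 0 M, f a) + f M := by
  have h1 : Ioo 0 (M+1) = insert M (Ioo 0 M) := by
    ext t; simp only [mem_Ioo, mem_insert]; omega
  rw [h1, Finset.sum_insert (by simp), add_comm]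

lemma zeta_succ (M h1 h2 : ℕ) (hM : 1 ≤ M) :
    zetaShS2 (M+1) h1 h2 = zetaShS2 M h1 h2 + ∑ n ∈ Ioo 0 M,
      (1/((n:ℚ)^h1 * (M:ℚ)^h2) + 1/((n:ℚ)^h1 * (-((M:ℚ) - (n:ℚ)))^h2)
        + 1/((-(M:ℚ))^h1 * (-(n:ℚ))^h2)) := by
  unfold zetaShS2
  rw [sum_Ioo_split M hM (fun n2 => ∑ n1 ∈ Finset.Ioo 0 n2, 1 / ((n1 : ℚ) ^ h1 * (n2 : ℚ) ^ h2)),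
    sum_Ioo_split M hM (fun n1 => ∑ m2 ∈ Finset.Ioo 0 (M + 1 - n1),
      1 / ((n1 : ℚ) ^ h1 * (-(m2 : ℚ)) ^ h2)),
    sum_Ioo_split M hM (fun m1 => ∑ m2 ∈ Finset.Ioo 0 m1,
      1 / ((-(m1 : ℚ)) ^ h1 * (-(m2 : ℚ)) ^ h2))]
  have hBtop : ∑ m2 ∈ Finset.Ioo 0 (M + 1 - M), 1 / ((M : ℚ) ^ h1 * (-(m2 : ℚ)) ^ h2) = 0 := by
    rw [show M + 1 - M = 1 from by omega, show Finset.Ioo (0:ℕ) 1 = ∅ by decide, Finset.sum_empty]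
  have hB : ∀ n1 ∈ Ioo 0 M,
      (∑ m2 ∈ Finset.Ioo 0 (M + 1 - n1), 1 / ((n1 : ℚ) ^ h1 * (-(m2 : ℚ)) ^ h2))
      = (∑ m2 ∈ Finset.Ioo 0 (M - n1), 1 / ((n1 : ℚ) ^ h1 * (-(m2 : ℚ)) ^ h2))
        + 1 / ((n1 : ℚ) ^ h1 * (-((M:ℚ) - (n1:ℚ))) ^ h2) := by
    intro n1 hn1
    rw [mem_Ioo] at hn1
    rw [show M + 1 - n1 = (M - n1) + 1 from by omega,
      sum_Ioo_split (M - n1) (by omega) (fun m2 => 1 / ((n1 : ℚ) ^ h1 * (-(m2 : ℚ)) ^ h2)),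
      Nat.cast_sub hn1.2.le]
  rw [Finset.sum_congr rfl hB, Finset.sum_add_distrib, hBtop]
  rw [Finset.sum_add_distrib, Finset.sum_add_distrib]
  ring

lemma reflect (M : ℕ) (f g : ℕ → ℚ) (h : ∀ n ∈ Ioo 0 M, f n = g (M - n)) :
    ∑ n ∈ Ioo 0 M, f n = ∑ n ∈ Ioo 0 M, g n := by
  refine Finset.sum_nbij' (fun n => M - n) (fun n => M - n) ?_ ?_ ?_ ?_ h <;>
    · intro a ha
      simp only [mem_Ioo] at ha ⊢
      omega

set_option maxHeartbeats 1600000 in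
/-- Root-change (shuffle) relation at `t = 0`:
`Σ_{a+b=k₁+k₂, a,b≥1} (C(b-1,b-k₁)+C(b-1,b-k₂)) ζ^⧢_{S,M}(a,b)
  = (-1)^{k₁} ζ^⧢_{S,M}(k₂,k₁)` (with `C(n,r)=0` for `r<0`, encoded by `if`). -/
theorem stmt_15 (k1 k2 M : ℕ) (h1 : 0 < k1) (h2 : 0 < k2) (hM : 1 ≤ M) :
    (∑ a ∈ Finset.Ioo 0 (k1 + k2),
        (((if k1 ≤ k1 + k2 - a then (((k1 + k2 - a - 1).choose (k1 + k2 - a - k1) : ℕ) : ℚ) else 0)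
          + (if k2 ≤ k1 + k2 - a then (((k1 + k2 - a - 1).choose (k1 + k2 - a - k2) : ℕ) : ℚ) else 0))
          * zetaShS2 M a (k1 + k2 - a)))
      = (-1 : ℚ) ^ k1 * zetaShS2 M k2 k1 := by
  have hcoef : ∀ a : ℕ,
      ((if k1 ≤ k1 + k2 - a then (((k1 + k2 - a - 1).choose (k1 + k2 - a - k1) : ℕ) : ℚ) else 0)
        + (if k2 ≤ k1 + k2 - a then (((k1 + k2 - a - 1).choose (k1 + k2 - a - k2) : ℕ) : ℚ) else 0))
      = cfQ k1 (k1+k2-a) + cfQ k2 (k1+k2-a) := fun a => rfl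
  simp only [hcoef]
  induction M, hM using Nat.le_induction with
  | base => simp [zeta_one]
  | succ M hM ih =>
    rw [zeta_succ M k2 k1 hM]
    have hstep : ∀ a ∈ Ioo 0 (k1+k2),
        (cfQ k1 (k1+k2-a) + cfQ k2 (k1+k2-a)) * zetaShS2 (M+1) a (k1+k2-a)
        = (cfQ k1 (k1+k2-a) + cfQ k2 (k1+k2-a)) * zetaShS2 M a (k1+k2-a)
          + (cfQ k1 (k1+k2-a) + cfQ k2 (k1+k2-a)) * ∑ n ∈ Ioo 0 M,
            (1/((n:ℚ)^a * (M:ℚ)^(k1+k2-a)) + 1/((n:ℚ)^a * (-((M:ℚ) - (n:ℚ)))^(k1+k2-a))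
              + 1/((-(M:ℚ))^a * (-(n:ℚ))^(k1+k2-a))) := by
      intro a _
      rw [zeta_succ M a (k1+k2-a) hM]
      ring
    rw [Finset.sum_congr rfl hstep, Finset.sum_add_distrib, ih, mul_add]
    congr 1
    simp only [Finset.mul_sum]
    rw [Finset.sum_comm]
    -- now: ∑ n ∈ Ioo 0 M, ∑ a ∈ Ioo 0 (k1+k2), c a * (...) = ∑ n ∈ Ioo 0 M, (-1)^k1 * (...)
    set L : ℕ → ℚ := fun n => ∑ a ∈ Ioo 0 (k1+k2), (cfQ k1 (k1+k2-a) + cfQ k2 (k1+k2-a)) *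
        (1/((n:ℚ)^a * (M:ℚ)^(k1+k2-a)) + 1/((n:ℚ)^a * (-((M:ℚ) - (n:ℚ)))^(k1+k2-a))
          + 1/((-(M:ℚ))^a * (-(n:ℚ))^(k1+k2-a))) with hL
    set L' : ℕ → ℚ := fun n => ∑ a ∈ Ioo 0 (k1+k2), (cfQ k1 (k1+k2-a) + cfQ k2 (k1+k2-a)) *
        (1/(((M:ℚ) - (n:ℚ))^a * (M:ℚ)^(k1+k2-a)) + 1/(((M:ℚ) - (n:ℚ))^a * (-(n:ℚ))^(k1+k2-a))
          + 1/((-(M:ℚ))^a * (-((M:ℚ) - (n:ℚ)))^(k1+k2-a))) with hL'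
    set R : ℕ → ℚ := fun n => (-1:ℚ)^k1 *
        (1/((n:ℚ)^k2 * (M:ℚ)^k1) + 1/((n:ℚ)^k2 * (-((M:ℚ) - (n:ℚ)))^k1)
          + 1/((-(M:ℚ))^k2 * (-(n:ℚ))^k1)) with hR
    set R' : ℕ → ℚ := fun n => (-1:ℚ)^k1 *
        (1/(((M:ℚ) - (n:ℚ))^k2 * (M:ℚ)^k1) + 1/(((M:ℚ) - (n:ℚ))^k2 * (-(n:ℚ))^k1)
          + 1/((-(M:ℚ))^k2 * (-((M:ℚ) - (n:ℚ)))^k1)) with hR'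
    show ∑ n ∈ Ioo 0 M, L n = ∑ n ∈ Ioo 0 M, R n
    have hML : ∀ n ∈ Ioo 0 M, ((M - n : ℕ) : ℚ) = (M:ℚ) - (n:ℚ) := by
      intro n hn; rw [mem_Ioo] at hn; exact_mod_cast Nat.cast_sub hn.2.le
    have hLL' : ∑ n ∈ Ioo 0 M, L n = ∑ n ∈ Ioo 0 M, L' n := by
      apply reflect
      intro n hn
      rw [mem_Ioo] at hn
      rw [hL, hL']
      simp only
      rw [Nat.cast_sub hn.2.le]
      apply Finset.sum_congr rfl
      intro a _
      rw [show (M:ℚ) - ((M:ℚ) - (n:ℚ)) = (n:ℚ) from by ring]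
    have hRR' : ∑ n ∈ Ioo 0 M, R' n = ∑ n ∈ Ioo 0 M, R n := by
      apply reflect
      intro n hn
      rw [mem_Ioo] at hn
      rw [hR, hR']
      simp only
      rw [Nat.cast_sub hn.2.le]
      rw [show (M:ℚ) - ((M:ℚ) - (n:ℚ)) = (n:ℚ) from by ring]
    have hkey : ∀ n ∈ Ioo 0 M, L n + L' n = R n + R' n := by
      intro n hn
      rw [mem_Ioo] at hn
      have hx : ((n:ℚ)) ≠ 0 := Nat.cast_ne_zero.2 (by omega)
      have hMQ : (0:ℚ) < (M:ℚ) - (n:ℚ) := by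
        have : (n:ℚ) < (M:ℚ) := by exact_mod_cast hn.2
        linarith
      have hy : ((M:ℚ) - (n:ℚ)) ≠ 0 := ne_of_gt hMQ
      have hs : ((M:ℚ)) ≠ 0 := Nat.cast_ne_zero.2 (by omega)
      have hsum : (n:ℚ) + ((M:ℚ) - (n:ℚ)) = (M:ℚ) := by ring
      exact symkey k1 k2 h1 h2 (n:ℚ) ((M:ℚ) - (n:ℚ)) (M:ℚ) hsum hx hy hs
    have h2q : (2:ℚ) ≠ 0 := two_ne_zero
    apply mul_left_cancel₀ h2q
    rw [two_mul, two_mul]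
    calc (∑ n ∈ Ioo 0 M, L n) + (∑ n ∈ Ioo 0 M, L n)
        = (∑ n ∈ Ioo 0 M, L n) + (∑ n ∈ Ioo 0 M, L' n) := by rw [hLL']
      _ = ∑ n ∈ Ioo 0 M, (L n + L' n) := by rw [← Finset.sum_add_distrib]
      _ = ∑ n ∈ Ioo 0 M, (R n + R' n) := Finset.sum_congr rfl hkey
      _ = (∑ n ∈ Ioo 0 M, R n) + (∑ n ∈ Ioo 0 M, R' n) := Finset.sum_add_distrib
      _ = (∑ n ∈ Ioo 0 M, R n) + (∑ n ∈ Ioo 0 M, R n) := by rw [hRR']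
end
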